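/- arXiv:1104.0336 — 10 statements merged into one kernel-verified Lean document; each statement's English description precedes it below -/
import Mathlib

section
/- Under the hypotheses of the first-order commutativity expansion, at indices i,j where the joint eigenvalues coincide, the second-order coefficient of the commutator vanishes: [Γ^r, Γ^s]_{ij} = 0 whenever x_i = x_j. -/
/-! At an entry `(i, j)` with `x i = x j` every term of the expanded commutator
`[D r + t Γ r + h r, D s + t Γ s + h s]` that contains a `D` vanishes, because
`(diagonal v * M - M * diagonal v) i j = (v i - v j) * M i j`. What is left is
`t² [Γ r, Γ s] i j + o(t²)`, which vanishes near `t = 0`, forcing `[Γ r, Γ s] i j = 0`. -/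

open Asymptotics Filter Topology

namespace Matrix

variable {n R : Type*} [Fintype n] [DecidableEq n] [CommRing R]

theorem diagonal_mul_sub_mul_diagonal_apply (v : n → R) (M : Matrix n n R) (i j : n) :
    (diagonal v * M - M * diagonal v) i j = (v i - v j) * M i j := by
  rw [sub_apply, diagonal_mul, mul_diagonal]
  ring

theorem commutator_diagonal_add_apply {S : Type*} [CommRing S] [Algebra S R]
    {v w : n → R} {i j : n} (hv : v i = v j) (hw : w i = w j)
    (t : S) (G G' H H' : Matrix n n R) :
    ((diagonal v + t • G + H) * (diagonal w + t • G' + H')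
        - (diagonal w + t • G' + H') * (diagonal v + t • G + H)) i j
      = t ^ 2 • (G * G' - G' * G) i j + t • (G * H' - H' * G) i j
        + t • (H * G' - G' * H) i j + (H * H' - H' * H) i j := by
  set A := t • G + H
  set B := t • G' + H'
  have hsplit : (diagonal v + A) * (diagonal w + B) - (diagonal w + B) * (diagonal v + A)
      = (diagonal v * (diagonal w + B) - (diagonal w + B) * diagonal v)
        - (diagonal w * A - A * diagonal w) + (A * B - B * A) := by
    noncomm_ring
  have hAB : A * B - B * A = t ^ 2 • (G * G' - G' * G) + t • (G * H' - H' * G)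
      + t • (H * G' - G' * H) + (H * H' - H' * H) := by
    simp only [A, B, mul_add, add_mul, smul_mul_assoc, mul_smul_comm]
    module
  rw [add_assoc, add_assoc, hsplit, hAB, add_apply, sub_apply, diagonal_mul_sub_mul_diagonal_apply,
    diagonal_mul_sub_mul_diagonal_apply, hv, hw]
  simp only [add_apply, smul_apply, sub_self, zero_mul, zero_add]

section Asymptotics

variable {α m n p 𝕜 : Type*} [Fintype n] [NormedField 𝕜] {l : Filter α}

theorem isLittleO_const_mul_apply {g : α → ℝ} {B : α → Matrix n p 𝕜}
    (hB : ∀ k j, (fun t => B t k j) =o[l] g) (M : Matrix m n 𝕜) (i : m) (j : p) :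
    (fun t => (M * B t) i j) =o[l] g := by
  simp only [mul_apply]
  exact IsLittleO.fun_sum fun k _ => (hB k j).const_mul_left (M i k)

theorem isLittleO_mul_const_apply {g : α → ℝ} {B : α → Matrix m n 𝕜}
    (hB : ∀ i k, (fun t => B t i k) =o[l] g) (M : Matrix n p 𝕜) (i : m) (j : p) :
    (fun t => (B t * M) i j) =o[l] g := by
  simp only [mul_apply, mul_comm (B _ i _)]
  exact IsLittleO.fun_sum fun k _ => (hB i k).const_mul_left (M k j)

theorem isLittleO_mul_apply {f g : α → ℝ} {A : α → Matrix m n 𝕜} {B : α → Matrix n p 𝕜}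
    (hA : ∀ i k, (fun t => A t i k) =o[l] f) (hB : ∀ k j, (fun t => B t k j) =o[l] g)
    (i : m) (j : p) :
    (fun t => (A t * B t) i j) =o[l] (fun t => f t * g t) := by
  simp only [mul_apply]
  exact IsLittleO.fun_sum fun k _ => (hA i k).mul (hB k j)

end Asymptotics

end Matrix

theorem isLittleO_sq_commutator_remainder {n 𝕜 : Type*} [Fintype n] [NormedField 𝕜]
    [NormedAlgebra ℝ 𝕜] {l : Filter ℝ} {H H' : ℝ → Matrix n n 𝕜}
    (hH : ∀ k k', (fun t => H t k k') =o[l] fun t => t)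
    (hH' : ∀ k k', (fun t => H' t k k') =o[l] fun t => t) (G G' : Matrix n n 𝕜) (i j : n) :
    (fun t : ℝ => t • (G * H' t - H' t * G) i j + t • (H t * G' - G' * H t) i j
        + (H t * H' t - H' t * H t) i j) =o[l] fun t => t ^ 2 := by
  have hGH' : (fun t => (G * H' t - H' t * G) i j) =o[l] fun t => t :=
    (Matrix.isLittleO_const_mul_apply hH' G i j).sub (Matrix.isLittleO_mul_const_apply hH' G i j)
  have hHG' : (fun t => (H t * G' - G' * H t) i j) =o[l] fun t => t :=
    (Matrix.isLittleO_mul_const_apply hH G' i j).sub (Matrix.isLittleO_const_mul_apply hH G' i j)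
  have hHH' : (fun t => (H t * H' t - H' t * H t) i j) =o[l] fun t => t * t :=
    (Matrix.isLittleO_mul_apply hH hH' i j).sub (Matrix.isLittleO_mul_apply hH' hH i j)
  have ht := isBigO_refl (fun t : ℝ => t) l
  simpa only [smul_eq_mul, ← sq] using
    ((ht.smul_isLittleO hGH').add (ht.smul_isLittleO hHG')).add hHH'

theorem eq_zero_of_eventually_sq_smul_add_eq_zero {E : Type*} [NormedAddCommGroup E]
    [NormedSpace ℝ E] {c : E} {ρ : ℝ → E} (hρ : ρ =o[𝓝 0] fun t => t ^ 2)
    (h : ∀ᶠ t in 𝓝 0, t ^ 2 • c + ρ t = 0) : c = 0 := by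
  have hc : (fun t : ℝ => t ^ 2 • c) =o[𝓝 0] fun t => t ^ 2 :=
    hρ.neg_left.congr' (h.mono fun t ht => (eq_neg_of_add_eq_zero_left ht).symm) .rfl
  by_contra hc0
  have hO : (fun t : ℝ => t ^ 2) =O[𝓝 0] fun t => t ^ 2 • c :=
    isBigO_of_le' (c := ‖c‖⁻¹) _ fun t => by
      rw [norm_smul, mul_comm, mul_inv_cancel_right₀ (norm_ne_zero_iff.2 hc0)]
  refine isLittleO_irrefl ?_ ((hO.trans_isLittleO hc).mono nhdsWithin_le_nhds :
    (fun t : ℝ => t ^ 2) =o[𝓝[≠] (0 : ℝ)] fun t => t ^ 2)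
  refine Eventually.frequently ?_
  filter_upwards [self_mem_nhdsWithin] with t ht using pow_ne_zero 2 ht

theorem stmt1_general (d n : ℕ) (x : Fin n → Fin d → ℝ)
    (D Γ : Fin d → Matrix (Fin n) (Fin n) ℂ)
    (hD : ∀ r, D r = Matrix.diagonal fun i => (x i r : ℂ))
    (h : ℝ → Fin d → Matrix (Fin n) (Fin n) ℂ)
    (hh : ∀ r i j, (fun t => h t r i j) =o[nhds (0 : ℝ)] fun t => t)
    (hcomm : ∀ᶠ t in nhds (0 : ℝ), ∀ r s : Fin d,
      (D r + t • Γ r + h t r) * (D s + t • Γ s + h t s)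
        = (D s + t • Γ s + h t s) * (D r + t • Γ r + h t r))
    (i j : Fin n) (hij : x i = x j) (r s : Fin d) :
    (Γ r * Γ s - Γ s * Γ r) i j = 0 := by
  have hx : ∀ q, (x i q : ℂ) = x j q := fun q => by rw [hij]
  refine eq_zero_of_eventually_sq_smul_add_eq_zero
    (isLittleO_sq_commutator_remainder (hh r) (hh s) (Γ r) (Γ s) i j) ?_
  filter_upwards [hcomm] with t ht
  have hexp := Matrix.commutator_diagonal_add_apply (v := fun k => (x k r : ℂ))
    (w := fun k => (x k s : ℂ)) (hx r) (hx s) t (Γ r) (Γ s) (h t r) (h t s)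
  rw [← hD r, ← hD s, ht r s, sub_self, Matrix.zero_apply] at hexp
  rw [← add_assoc, ← add_assoc, ← hexp]

/-- Under the first-order commutativity expansion hypotheses, at indices
`(i,j)` where the joint eigenvalues coincide (`x_i = x_j`), the second-order coefficient
of the commutator vanishes: `[Γ^r, Γ^s]_{ij} = 0`. -/
theorem stmt1 (d n : ℕ) (x : Fin n → Fin d → ℝ)
    (D Γ : Fin d → Matrix (Fin n) (Fin n) ℂ)
    (hD : ∀ r, D r = Matrix.diagonal fun i => (x i r : ℂ))
    (hherm : ∀ r, (Γ r).IsHermitian)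
    (h : ℝ → Fin d → Matrix (Fin n) (Fin n) ℂ)
    (hh : ∀ r i j, (fun t => h t r i j) =o[nhds (0 : ℝ)] fun t => t)
    (hcomm : ∀ᶠ t in nhds (0 : ℝ), ∀ r s : Fin d,
      (D r + t • Γ r + h t r) * (D s + t • Γ s + h t s)
        = (D s + t • Γ s + h t s) * (D r + t • Γ r + h t r))
    (i j : Fin n) (hij : x i = x j) (r s : Fin d) :
    (Γ r * Γ s - Γ s * Γ r) i j = 0 :=
  stmt1_general d n x D Γ hD h hh hcomm i j hij r s
end

section
/- Given a d-tuple of commuting diagonal matrices D and a d-tuple of self-adjoint matrices Γ satisfying [D^r, Γ^s] = [D^s, Γ^r] and [Γ̃^r, Γ̃^s] = 0 for all r,s, the curve S^r(t) = e^{Yt}(D^r + tΓ̃^r)e^{−Yt} consists of pairwise-commuting self-adjoint matrices for every t, where Y is the skew-Hermitian matrix with Y_{ij} = Γ^q_{ij}/(x^q_j − x^q_i) when x_i ≠ x_j (q chosen with x^q_i ≠ x^q_j) and Y_{ij} = 0 otherwise. -/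
/-!
Because `Y` is skew-Hermitian, `e^{-tY} = (e^{tY})ᴴ` is also the inverse of `e^{tY}`, so `S^r(t)` is
a unitary conjugate of `D^r + tΓ̃^r`. Those matrices are Hermitian and pairwise commute: `Γ̃^s` is
supported on the blocks where the joint eigenvalues coincide, and each `D^r` is scalar there.
-/

open NormedSpace Matrix

theorem Commute.mul_mul_of_mul_eq_one {M : Type*} [Monoid M] {u v a b : M} (hvu : v * u = 1)
    (h : Commute a b) : Commute (u * a * v) (u * b * v) := by
  calc u * a * v * (u * b * v) = u * (a * (v * u) * b) * v := by simp only [mul_assoc]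
    _ = u * (b * (v * u) * a) * v := by rw [hvu, mul_one, mul_one, h.eq]
    _ = u * b * v * (u * a * v) := by simp only [mul_assoc]

namespace Matrix

variable {ι 𝔸 : Type*} [Fintype ι] [DecidableEq ι]

theorem exp_neg_mul_exp [NormedRing 𝔸] [NormedAlgebra ℚ 𝔸] [CompleteSpace 𝔸]
    (A : Matrix ι ι 𝔸) : exp (-A) * exp A = 1 := by
  rw [← exp_add_of_commute _ _ (Commute.refl A).neg_left, neg_add_cancel, exp_zero]

theorem exp_neg_of_conjTranspose_eq_neg [NormedRing 𝔸] [NormedAlgebra ℚ 𝔸] [CompleteSpace 𝔸]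
    [StarRing 𝔸] [ContinuousStar 𝔸] {A : Matrix ι ι 𝔸} (hA : Aᴴ = -A) :
    exp (-A) = star (exp A) := by
  rw [← hA, exp_conjTranspose, star_eq_conjTranspose]

theorem commute_diagonal_of_apply_eq_zero {α : Type*} [CommSemiring α] {d : ι → α}
    {M : Matrix ι ι α} (hM : ∀ i j, d i ≠ d j → M i j = 0) : Commute (diagonal d) M := by
  ext i j
  rw [diagonal_mul, mul_diagonal]
  by_cases h : d i = d j
  · rw [h, mul_comm]
  · simp [hM i j h]

end Matrix

theorem Matrix.IsHermitian.of_apply_eq_ite {ι α β : Type*} [AddMonoid α] [StarAddMonoid α]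
    [DecidableEq β] {A M : Matrix ι ι α} (hA : A.IsHermitian) {f : ι → β}
    (hM : ∀ i j, M i j = if f i = f j then A i j else 0) : M.IsHermitian := by
  ext i j
  rw [conjTranspose_apply, hM, hM]
  split_ifs
  · exact hA.apply i j
  all_goals simp_all

theorem Matrix.conjTranspose_eq_neg_of_apply_eq_div_sub {ι κ 𝕜 : Type*} [RCLike 𝕜]
    {x : ι → κ → ℝ} {Γ : κ → Matrix ι ι 𝕜} (hΓ : ∀ q, (Γ q).IsHermitian) {Y : Matrix ι ι 𝕜}
    (hY0 : ∀ i j, x i = x j → Y i j = 0)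
    (hY : ∀ i j q, x i q ≠ x j q → Y i j = Γ q i j / ((x j q : 𝕜) - (x i q : 𝕜))) :
    Yᴴ = -Y := by
  ext i j
  rw [conjTranspose_apply, neg_apply]
  by_cases h : x i = x j
  · rw [hY0 i j h, hY0 j i h.symm, star_zero, neg_zero]
  obtain ⟨q, hq⟩ := Function.ne_iff.mp h
  rw [hY j i q (Ne.symm hq), hY i j q hq, star_div₀, (hΓ q).apply i j, star_sub, RCLike.star_def,
    RCLike.conj_ofReal, RCLike.conj_ofReal, ← neg_sub, div_neg]

theorem stmt2_general (d n : ℕ) (x : Fin n → Fin d → ℝ)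
    (D Γ Γt : Fin d → Matrix (Fin n) (Fin n) ℂ)
    (hD : ∀ r, D r = Matrix.diagonal fun i => (x i r : ℂ))
    (hherm : ∀ r, (Γ r).IsHermitian)
    (hΓt : ∀ r i j, Γt r i j = if x i = x j then Γ r i j else 0)
    (hcomm2 : ∀ r s, Γt r * Γt s = Γt s * Γt r)
    (Y : Matrix (Fin n) (Fin n) ℂ)
    (hY0 : ∀ i j, x i = x j → Y i j = 0)
    (hY : ∀ i j q, x i q ≠ x j q → Y i j = Γ q i j / ((x j q : ℂ) - (x i q : ℂ)))
    (S : Fin d → ℝ → Matrix (Fin n) (Fin n) ℂ)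
    (hS : ∀ r t, S r t = exp (t • Y) * (D r + t • Γt r) * exp (-(t • Y)))
    (t : ℝ) :
    (∀ r s, S r t * S s t = S s t * S r t) ∧ ∀ r, (S r t).IsHermitian := by
  have hYskew : Yᴴ = -Y := conjTranspose_eq_neg_of_apply_eq_div_sub hherm hY0 hY
  have hexp_neg : exp (-(t • Y)) = star (exp (t • Y)) :=
    exp_neg_of_conjTranspose_eq_neg (by rw [conjTranspose_smul, star_trivial, hYskew, smul_neg])
  have hD_Γt (r s) : Commute (D r) (Γt s) := by
    rw [hD r]
    exact commute_diagonal_of_apply_eq_zero fun i j hij => by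
      rw [hΓt, if_neg fun h => hij (by rw [h])]
  refine ⟨fun r s => ?_, fun r => ?_⟩
  · have hDD : Commute (D r) (D s) := by rw [hD, hD]; exact commute_diagonal _ _
    have hΓt_right : Commute (Γt r) (D s + t • Γt s) :=
      (hD_Γt s r).symm.add_right (Commute.smul_right (hcomm2 r s) t)
    rw [hS, hS]
    exact (Commute.mul_mul_of_mul_eq_one (exp_neg_mul_exp _)
      ((hDD.add_right ((hD_Γt r s).smul_right t)).add_left (hΓt_right.smul_left t))).eq
  · have hDr : (D r).IsHermitian := by
      rw [hD r]; exact isHermitian_diagonal_iff.2 fun i => Complex.conj_ofReal _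
    have hΓt_herm : (Γt r).IsHermitian := (hherm r).of_apply_eq_ite (hΓt r)
    rw [hS, hexp_neg]
    exact ((hDr.add (hΓt_herm.smul (IsSelfAdjoint.all t))).isSelfAdjoint.conjugate _)

/-- Given diagonal `D^r` and self-adjoint `Γ^r` with
`[D^r, Γ^s] = [D^s, Γ^r]` and `[Γ̃^r, Γ̃^s] = 0`, the curve
`S^r(t) = e^{Yt}(D^r + tΓ̃^r)e^{−Yt}` consists of pairwise-commuting self-adjoint
matrices for every `t`, where `Y_{ij} = Γ^q_{ij}/(x^q_j − x^q_i)` when `x_i ≠ x_j`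
(with `x^q_i ≠ x^q_j`) and `Y_{ij} = 0` otherwise. -/
theorem stmt2 (d n : ℕ) (x : Fin n → Fin d → ℝ)
    (D Γ Γt : Fin d → Matrix (Fin n) (Fin n) ℂ)
    (hD : ∀ r, D r = Matrix.diagonal fun i => (x i r : ℂ))
    (hherm : ∀ r, (Γ r).IsHermitian)
    (hΓt : ∀ r i j, Γt r i j = if x i = x j then Γ r i j else 0)
    (hcomm1 : ∀ r s, D r * Γ s - Γ s * D r = D s * Γ r - Γ r * D s)
    (hcomm2 : ∀ r s, Γt r * Γt s = Γt s * Γt r)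
    (Y : Matrix (Fin n) (Fin n) ℂ)
    (hY0 : ∀ i j, x i = x j → Y i j = 0)
    (hY : ∀ i j q, x i q ≠ x j q → Y i j = Γ q i j / ((x j q : ℂ) - (x i q : ℂ)))
    (S : Fin d → ℝ → Matrix (Fin n) (Fin n) ℂ)
    (hS : ∀ r t, S r t = exp (t • Y) * (D r + t • Γt r) * exp (-(t • Y)))
    (t : ℝ) :
    (∀ r s, S r t * S s t = S s t * S r t) ∧ ∀ r, (S r t).IsHermitian :=
  stmt2_general d n x D Γ Γt hD hherm hΓt hcomm2 Y hY0 hY S hS t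
end

section
/- If A and B are pairs of commuting self-adjoint matrices such that Γ^q_{ij}(x^r_i − x^r_j) = Γ^r_{ij}(x^q_i − x^q_j) holds for all indices (the compatibility condition from the commuting variety), and x_i = x_j but x_k ≠ x_i, then Γ^r_{ik}Γ^s_{kj} − Γ^s_{ik}Γ^r_{kj} = 0 for all r,s. -/
/-- Under the compatibility condition
`Γ^s_{ab}(x^r_a − x^r_b) = Γ^r_{ab}(x^s_a − x^s_b)`, if `x_i = x_j` but `x_k ≠ x_i`,
then `Γ^r_{ik}Γ^s_{kj} − Γ^s_{ik}Γ^r_{kj} = 0` for all `r, s`. -/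
theorem stmt6 (d n : ℕ) (x : Fin n → Fin d → ℝ)
    (Γ : Fin d → Matrix (Fin n) (Fin n) ℂ)
    (hcompat : ∀ (a b : Fin n) (r s : Fin d),
      Γ s a b * ((x a r : ℂ) - (x b r : ℂ)) = Γ r a b * ((x a s : ℂ) - (x b s : ℂ)))
    (i j k : Fin n) (hij : x i = x j) (hki : x k ≠ x i) (r s : Fin d) :
    Γ r i k * Γ s k j = Γ s i k * Γ r k j := by
  obtain ⟨t, ht⟩ := Function.ne_iff.mp hki
  set c : ℂ := (x i t : ℂ) - x k t with hcdef
  have hc : c ≠ 0 := by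
    simp only [hcdef, sub_ne_zero]
    exact_mod_cast (Ne.symm ht)
  have hj : ∀ m, (x j m : ℂ) = x i m := fun m => by rw [← hij]
  have h1 := hcompat i k t r
  have h2 := hcompat i k t s
  have h3 := hcompat k j t r
  have h4 := hcompat k j t s
  simp only [hj] at h3 h4
  have e1 : Γ r i k * c = Γ t i k * ((x i r : ℂ) - x k r) := by
    linear_combination h1
  have e2 : Γ s i k * c = Γ t i k * ((x i s : ℂ) - x k s) := by
    linear_combination h2
  have e3 : Γ r k j * c = Γ t k j * ((x i r : ℂ) - x k r) := by
    linear_combination -h3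
  have e4 : Γ s k j * c = Γ t k j * ((x i s : ℂ) - x k s) := by
    linear_combination -h4
  have key : (Γ r i k * Γ s k j) * c ^ 2 = (Γ s i k * Γ r k j) * c ^ 2 := by
    linear_combination (Γ s k j * c) * e1 + (Γ t i k * ((x i r : ℂ) - x k r)) * e4
      - (Γ r k j * c) * e2 - (Γ t i k * ((x i s : ℂ) - x k s)) * e3
  exact mul_right_cancel₀ (pow_ne_zero 2 hc) key
end

section
/- Under the hypotheses of Theorem 2.1 (necessity direction), the compressed derivatives satisfy [Γ̃^r, Γ̃^s] = 0 for all r,s, where Γ̃^r keeps only entries (i,j) with x_i = x_j. -/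
/-- Under the compatibility condition (a) and the vanishing of commutator
entries at coinciding joint eigenvalues (b), the compressed matrices `Γ̃^r`
(keeping only entries `(i,j)` with `x_i = x_j`) pairwise commute. -/
theorem stmt7 (d n : ℕ) (x : Fin n → Fin d → ℝ)
    (Γ : Fin d → Matrix (Fin n) (Fin n) ℂ)
    (hherm : ∀ r, (Γ r).IsHermitian)
    (hcompat : ∀ (i j : Fin n) (r s : Fin d),
      Γ s i j * ((x i r : ℂ) - (x j r : ℂ)) = Γ r i j * ((x i s : ℂ) - (x j s : ℂ)))
    (hcommEntries : ∀ (i j : Fin n) (r s : Fin d), x i = x j →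
      (Γ r * Γ s - Γ s * Γ r) i j = 0)
    (Γt : Fin d → Matrix (Fin n) (Fin n) ℂ)
    (hΓt : ∀ r i j, Γt r i j = if x i = x j then Γ r i j else 0)
    (r s : Fin d) :
    Γt r * Γt s - Γt s * Γt r = 0 := by
  -- Key cancellation lemma for off-block indices
  have key : ∀ (i j k : Fin n), x i = x j → x i ≠ x k →
      Γ r i k * Γ s k j = Γ s i k * Γ r k j := by
    intro i j k hij hik
    obtain ⟨r0, hr0⟩ := Function.ne_iff.mp hik
    have hc : ((x i r0 : ℂ) - x k r0) ≠ 0 := by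
      intro h
      apply hr0
      have := sub_eq_zero.mp h
      exact_mod_cast this
    have hjr0 : (x j r0 : ℂ) = x i r0 := by rw [hij]
    have hjr : (x j r : ℂ) = x i r := by rw [hij]
    have hjs : (x j s : ℂ) = x i s := by rw [hij]
    have hc' : ((x k r0 : ℂ) - x j r0) ≠ 0 := by
      rw [hjr0]
      intro h
      apply hc
      linear_combination -h
    have e1 : Γ r i k = Γ r0 i k * ((x i r : ℂ) - x k r) / ((x i r0 : ℂ) - x k r0) := by
      rw [eq_div_iff hc]; exact hcompat i k r0 r
    have e2 : Γ s k j = Γ r0 k j * ((x k s : ℂ) - x j s) / ((x k r0 : ℂ) - x j r0) := by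
      rw [eq_div_iff hc']; exact hcompat k j r0 s
    have e3 : Γ s i k = Γ r0 i k * ((x i s : ℂ) - x k s) / ((x i r0 : ℂ) - x k r0) := by
      rw [eq_div_iff hc]; exact hcompat i k r0 s
    have e4 : Γ r k j = Γ r0 k j * ((x k r : ℂ) - x j r) / ((x k r0 : ℂ) - x j r0) := by
      rw [eq_div_iff hc']; exact hcompat k j r0 r
    rw [e1, e2, e3, e4, hjr, hjs]
    field_simp
    ring
  ext i j
  simp only [Matrix.sub_apply, Matrix.mul_apply, Matrix.zero_apply]
  by_cases hij : x i = x j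
  · have termeq : ∀ k, Γt r i k * Γt s k j - Γt s i k * Γt r k j
        = Γ r i k * Γ s k j - Γ s i k * Γ r k j := by
      intro k
      by_cases hik : x i = x k
      · have hkj : x k = x j := hik.symm.trans hij
        simp [hΓt, hik, hkj]
      · simp only [hΓt, if_neg hik, if_neg (fun h : x k = x j => hik (hij.trans h.symm)),
          zero_mul, mul_zero, sub_zero]
        have := key i j k hij hik
        linear_combination -this
    have hsum : (∑ k, Γt r i k * Γt s k j) - (∑ k, Γt s i k * Γt r k j)
        = (∑ k, Γ r i k * Γ s k j) - (∑ k, Γ s i k * Γ r k j) := by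
      rw [← Finset.sum_sub_distrib, ← Finset.sum_sub_distrib]
      exact Finset.sum_congr rfl (fun k _ => termeq k)
    rw [hsum]
    have := hcommEntries i j r s hij
    simpa [Matrix.sub_apply, Matrix.mul_apply] using this
  · have z1 : ∀ k, Γt r i k * Γt s k j = 0 := by
      intro k
      by_cases hik : x i = x k
      · have : ¬ x k = x j := fun h => hij (hik.trans h)
        simp [hΓt, this]
      · simp [hΓt, hik]
    have z2 : ∀ k, Γt s i k * Γt r k j = 0 := by
      intro k
      by_cases hik : x i = x k
      · have : ¬ x k = x j := fun h => hij (hik.trans h)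
        simp [hΓt, this]
      · simp [hΓt, hik]
    simp [Finset.sum_eq_zero (fun k _ => z1 k), Finset.sum_eq_zero (fun k _ => z2 k)]
end

section
/- For a diagonalizable self-adjoint matrix tuple and a C^1 real function f, if a polynomial p agrees with f to first order at the joint spectrum of S(t*) and the joint eigenvalues of S(t) are Lipschitz in t, then ‖F(S(t)) − P(S(t))‖ = o(|t − t*|), where F, P are the induced matrix functions. -/
open Matrix Asymptotics Filter Topology

/-! A unitary conjugate of a diagonal matrix has operator norm the largest modulus of its
diagonal entries, so `‖(F - P)(S(t))‖` is controlled by the scalar functions `(f - p)(x_i(t))`.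
Each of these is `o(t - t*)`: `f - p` vanishes to first order at `x_i(t*)`, and the Lipschitz
curve `x_i` moves by `O(t - t*)`. -/

open scoped Matrix.Norms.L2Operator in
theorem Matrix.norm_toEuclideanCLM_unitary_conj_diagonal_le {n 𝕜 : Type*} [Fintype n]
    [DecidableEq n] [RCLike 𝕜] {U : Matrix n n 𝕜} (hU : U ∈ unitaryGroup n 𝕜) (v : n → 𝕜) :
    ‖toEuclideanCLM (𝕜 := 𝕜) (n := n) (U * diagonal v * Uᴴ)‖ ≤ ⨆ i, ‖v i‖ := by
  rw [← cstar_norm_def, ← star_eq_conjTranspose,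
    CStarRing.norm_mul_mem_unitary _ (Unitary.star_mem hU), CStarRing.norm_mem_unitary_mul _ hU,
    l2_opNorm_diagonal]
  exact (pi_norm_le_iff_of_nonneg (Real.iSup_nonneg fun _ => norm_nonneg _)).2
    fun i => le_ciSup (f := fun i => ‖v i‖) (Set.finite_range _).bddAbove i

theorem HasFDerivAt.isLittleO_comp_lipschitzWith {α E F : Type*} [SeminormedAddCommGroup α]
    [NormedAddCommGroup E] [NormedSpace ℝ E] [NormedAddCommGroup F] [NormedSpace ℝ F]
    {g : E → F} {γ : α → E} {K : NNReal} {t₀ : α} (hγ : LipschitzWith K γ)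
    (hg : HasFDerivAt g (0 : E →L[ℝ] F) (γ t₀)) :
    (fun t => g (γ t) - g (γ t₀)) =o[𝓝 t₀] fun t => t - t₀ := by
  have hflat : (fun y => g y - g (γ t₀)) =o[𝓝 (γ t₀)] fun y => y - γ t₀ := by
    simpa using hg.isLittleO
  have hγO : (fun t => γ t - γ t₀) =O[𝓝 t₀] fun t => t - t₀ :=
    .of_bound K <| .of_forall fun t => by
      simpa [dist_eq_norm] using hγ.dist_le_mul t t₀
  exact (hflat.comp_tendsto (hγ.continuous.tendsto t₀)).trans_isBigO hγO

theorem Asymptotics.IsLittleO.iSup_norm {α ι E F : Type*} [Finite ι]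
    [SeminormedAddGroup E] [SeminormedAddGroup F]
    {f : ι → α → E} {g : α → F} {l : Filter α} (h : ∀ i, f i =o[l] g) :
    (fun t => ⨆ i, ‖f i t‖) =o[l] g := by
  refine .of_bound fun c hc => ?_
  filter_upwards [eventually_all.2 fun i => (h i).bound hc] with t ht
  have hsup_nonneg : 0 ≤ ⨆ i, ‖f i t‖ := Real.iSup_nonneg fun i => norm_nonneg _
  rw [Real.norm_eq_abs, abs_of_nonneg hsup_nonneg]
  exact Real.iSup_le ht (by positivity)

/-- If the polynomial `p` agrees with the `C^1` function `f` to first order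
at the joint spectrum of `S(t*)`, and the joint eigenvalue curves `x_i(t)` are Lipschitz,
then `‖F(S(t)) − P(S(t))‖ ≤ max_i |(f−p)(x_i(t)) − (f−p)(x_i(t*))| = o(|t − t*|)`,
where `F, P` are the induced matrix functions and `‖·‖` is the operator norm. -/
theorem stmt8 (d n : ℕ) (Ω : Set (Fin d → ℝ)) (hΩ : IsOpen Ω)
    (f : (Fin d → ℝ) → ℝ) (hf : ContDiffOn ℝ 1 f Ω)
    (P : MvPolynomial (Fin d) ℝ) (p : (Fin d → ℝ) → ℝ)
    (hpdef : p = fun y => MvPolynomial.eval y P)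
    (t₀ : ℝ) (x : Fin n → ℝ → Fin d → ℝ) (K : NNReal)
    (hxLip : ∀ i, LipschitzWith K (x i))
    (hxΩ : ∀ i t, x i t ∈ Ω)
    (hagree : ∀ i, p (x i t₀) = f (x i t₀))
    (hagree' : ∀ i, fderivWithin ℝ p Ω (x i t₀) = fderivWithin ℝ f Ω (x i t₀))
    (U : ℝ → Matrix (Fin n) (Fin n) ℂ)
    (hU : ∀ t, U t ∈ Matrix.unitaryGroup (Fin n) ℂ)
    (FS PS : ℝ → Matrix (Fin n) (Fin n) ℂ)
    (hFS : ∀ t, FS t = U t * Matrix.diagonal (fun i => (f (x i t) : ℂ)) * (U t)ᴴ)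
    (hPS : ∀ t, PS t = U t * Matrix.diagonal (fun i => (p (x i t) : ℂ)) * (U t)ᴴ) :
    (∀ t, ‖(Matrix.toEuclideanCLM (𝕜 := ℂ) (n := Fin n)) (FS t - PS t)‖ ≤
        ⨆ i, |(f (x i t) - p (x i t)) - (f (x i t₀) - p (x i t₀))|) ∧
    (fun t => (Matrix.toEuclideanCLM (𝕜 := ℂ) (n := Fin n)) (FS t - PS t))
      =o[nhds t₀] fun t => t - t₀ := by
  have hbound : ∀ t, ‖(Matrix.toEuclideanCLM (𝕜 := ℂ) (n := Fin n)) (FS t - PS t)‖ ≤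
      ⨆ i, |(f (x i t) - p (x i t)) - (f (x i t₀) - p (x i t₀))| := by
    intro t
    have hdiff : FS t - PS t =
        U t * diagonal (fun i => ((f (x i t) - p (x i t) : ℝ) : ℂ)) * (U t)ᴴ := by
      rw [hFS t, hPS t, ← sub_mul, ← mul_sub, diagonal_sub]
      push_cast
      rfl
    rw [hdiff]
    refine (norm_toEuclideanCLM_unitary_conj_diagonal_le (hU t) _).trans_eq ?_
    simp only [hagree, sub_self, sub_zero, Complex.norm_real, Real.norm_eq_abs]
  refine ⟨hbound, ?_⟩
  have hflat : ∀ i, HasFDerivAt (fun y => f y - p y) (0 : (Fin d → ℝ) →L[ℝ] ℝ) (x i t₀) := by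
    intro i
    have hΩx : Ω ∈ 𝓝 (x i t₀) := hΩ.mem_nhds (hxΩ i t₀)
    have hfd : DifferentiableAt ℝ f (x i t₀) := (hf.contDiffAt hΩx).differentiableAt one_ne_zero
    have hpd : DifferentiableAt ℝ p (x i t₀) :=
      hpdef ▸ (AnalyticOnNhd.eval_mvPolynomial P _ (Set.mem_univ _)).differentiableAt
    have hderiv : fderiv ℝ p (x i t₀) = fderiv ℝ f (x i t₀) := by
      simpa only [fderivWithin_of_isOpen hΩ (hxΩ i t₀)] using hagree' i
    simpa only [hderiv, sub_self] using hfd.hasFDerivAt.fun_sub hpd.hasFDerivAt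
  have hsup := IsLittleO.iSup_norm fun i => (hflat i).isLittleO_comp_lipschitzWith (hxLip i)
  refine (IsBigO.of_bound' (.of_forall fun t => ?_)).trans_isLittleO hsup
  simpa only [Real.norm_eq_abs] using (hbound t).trans (le_abs_self _)
end

section
/- Higher-order derivative of a product of two resolvents: for C^m curves S(t), T(t) and resolvents R_1 = (ζ_1 I − S)^{-1}, R_2 = (ζ_2 I − T)^{-1}, the l-th derivative of R_1 R_2 equals the sum over index tuples (i_1,...,i_k)∪(i_{k+1},...,i_j) with i_1+...+i_j = l of (l!/(i_1!···i_j!)) R_1 S^{(i_1)} R_1 ··· S^{(i_k)} R_1 R_2 T^{(i_{k+1})} R_2 ··· T^{(i_j)} R_2. -/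
/-!
Write `R = (ζ - S)⁻¹`. Applying the Leibniz rule to `(ζ - S) R = 1` gives the recursion
`R^{(q+1)} = ∑_{i+j=q} C(q+1, i+1) R S^{(i+1)} R^{(j)}`. The sum over compositions satisfies the
same recursion (split off the first block, using `C(q+1, i+1) (q-i)! = (q+1)! / (i+1)!`), so it is
the `p`-th derivative of the resolvent. The Leibniz rule for `R₁ R₂` then multiplies two such sums,
and `C(l, p) p! (l-p)! = l!` merges their coefficients.
-/

attribute [local instance] Matrix.normedAddCommGroup Matrix.normedSpace

open Finset Filter Topology

namespace ContinuousLinearMap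

variable {𝕜 E F G : Type*} [NontriviallyNormedField 𝕜]
  [NormedAddCommGroup E] [NormedSpace 𝕜 E] [NormedAddCommGroup F] [NormedSpace 𝕜 F]
  [NormedAddCommGroup G] [NormedSpace 𝕜 G]

theorem iteratedDeriv_of_bilinear (B : E →L[𝕜] F →L[𝕜] G) {k : ℕ} {f : 𝕜 → E} {g : 𝕜 → F}
    {x : 𝕜} (hf : ContDiffAt 𝕜 k f x) (hg : ContDiffAt 𝕜 k g x) :
    iteratedDeriv k (fun y => B (f y) (g y)) x =
      ∑ ij ∈ antidiagonal k,
        k.choose ij.1 • B (iteratedDeriv ij.1 f x) (iteratedDeriv ij.2 g x) := by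
  induction k generalizing f g with
  | zero => simp
  | succ k ih =>
    have hderiv : deriv (fun y => B (f y) (g y)) =ᶠ[𝓝 x]
        fun y => B (f y) (deriv g y) + B (deriv f y) (g y) := by
      filter_upwards [hf.eventually (by simp), hg.eventually (by simp)] with y hfy hgy
      exact (B.hasDerivAt_of_bilinear (fun _ => (hfy.differentiableAt (by simp)).hasDerivAt)
        (fun _ => (hgy.differentiableAt (by simp)).hasDerivAt)).deriv
    have hf' : ContDiffAt 𝕜 k (deriv f) x := hf.derivWithin (by simp)
    have hg' : ContDiffAt 𝕜 k (deriv g) x := hg.derivWithin (by simp)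
    have hf₀ : ContDiffAt 𝕜 k f x := hf.of_le (by norm_cast; omega)
    have hg₀ : ContDiffAt 𝕜 k g x := hg.of_le (by norm_cast; omega)
    rw [iteratedDeriv_succ', hderiv.iteratedDeriv_eq,
      iteratedDeriv_fun_add (by fun_prop) (by fun_prop), ih hf₀ hg', ih hf' hg₀,
      sum_antidiagonal_choose_succ_nsmul fun i j => B (iteratedDeriv i f x) (iteratedDeriv j g x)]
    simp only [← iteratedDeriv_succ']
    congr 1
    refine sum_congr rfl fun ij hij => ?_
    rw [Nat.choose_symm_of_eq_add (mem_antidiagonal.mp hij).symm]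

end ContinuousLinearMap

theorem Nat.cast_choose_mul_factorial_div {K : Type*} [Field K] [CharZero K] {l p : ℕ}
    (hpl : p ≤ l) (b : K) :
    (l.choose p : K) * ((l - p).factorial / b) = l.factorial / (p.factorial * b) := by
  have hp : (p.factorial : K) ≠ 0 := Nat.cast_ne_zero.mpr p.factorial_ne_zero
  rw [← Nat.choose_mul_factorial_mul_factorial hpl]
  push_cast
  rw [mul_right_comm _ (p.factorial : K), mul_comm (p.factorial : K) b, mul_div_mul_right _ _ hp,
    mul_div_assoc]

namespace Composition

def consEquiv (q : ℕ) : (Σ i : Fin (q + 1), Composition (q - i)) ≃ Composition (q + 1) where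
  toFun x := ⟨(x.1 + 1 : ℕ) :: x.2.blocks,
    by
      simp only [List.mem_cons, forall_eq_or_imp]
      exact ⟨Nat.succ_pos _, fun _ => x.2.blocks_pos⟩,
    by
      simp only [List.sum_cons, x.2.blocks_sum]
      have := x.1.isLt
      omega⟩
  invFun c :=
    have hne : c.blocks ≠ [] := by simp [blocks_eq_nil]
    have hsum : c.blocks.head hne + c.blocks.tail.sum = q + 1 := by
      rw [← List.sum_cons, List.cons_head_tail, c.blocks_sum]
    ⟨⟨c.blocks.head hne - 1, by omega⟩,
      ⟨c.blocks.tail, fun hi => c.blocks_pos (List.mem_of_mem_tail hi), by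
        have := c.one_le_blocks (List.head_mem hne)
        simp only; omega⟩⟩
  left_inv _ := rfl
  right_inv c := by
    have hne : c.blocks ≠ [] := by simp [blocks_eq_nil]
    ext1
    simp only
    rw [Nat.sub_add_cancel (c.one_le_blocks (List.head_mem hne)), List.cons_head_tail]

variable {M : Type*} [AddCommMonoid M]

theorem sum_zero (F : List ℕ → M) : ∑ c : Composition 0, F c.blocks = F [] := by
  have hnil (c : Composition 0) : c.blocks = [] := c.blocks_eq_nil.mpr rfl
  have : Subsingleton (Composition 0) :=
    ⟨fun a b => Composition.ext ((hnil a).trans (hnil b).symm)⟩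
  rw [Fintype.sum_subsingleton _ (ones 0), hnil]

theorem sum_succ (q : ℕ) (F : List ℕ → M) :
    ∑ c : Composition (q + 1), F c.blocks =
      ∑ ij ∈ antidiagonal q, ∑ c : Composition ij.2, F ((ij.1 + 1) :: c.blocks) := by
  rw [← (consEquiv q).sum_comp, Fintype.sum_sigma, Nat.sum_antidiagonal_eq_sum_range_succ
    (fun i j => ∑ c : Composition j, F ((i + 1) :: c.blocks)), ← Fin.sum_univ_eq_sum_range]
  rfl

end Composition

section Expansion

variable (K : Type*) {A : Type*} [Field K] [Ring A] [Algebra K A]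

/-- With `R = (ζ - S(t))⁻¹` and `D i = S^{(i)}(t)`, this is the claimed value of `R^{(p)}(t)`. -/
def resolventDerivExpansion (R : A) (D : ℕ → A) (p : ℕ) : A :=
  ∑ c : Composition p, ((p.factorial : K) / ((c.blocks.map Nat.factorial).prod : ℕ)) •
    (R * (c.blocks.map fun i => D i * R).prod)

theorem resolventDerivExpansion_zero (R : A) (D : ℕ → A) :
    resolventDerivExpansion K R D 0 = R := by
  rw [resolventDerivExpansion, Composition.sum_zero fun L =>
    ((Nat.factorial 0 : K) / ((L.map Nat.factorial).prod : ℕ)) •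
      (R * (L.map fun i => D i * R).prod)]
  simp

theorem resolventDerivExpansion_succ [CharZero K] (R : A) (D : ℕ → A) (q : ℕ) :
    resolventDerivExpansion K R D (q + 1) = ∑ ij ∈ antidiagonal q,
      (q + 1).choose (ij.1 + 1) • (R * D (ij.1 + 1) * resolventDerivExpansion K R D ij.2) := by
  rw [resolventDerivExpansion, Composition.sum_succ q fun L =>
    (((q + 1).factorial : K) / ((L.map Nat.factorial).prod : ℕ)) •
      (R * (L.map fun i => D i * R).prod)]
  refine sum_congr rfl fun ij hij => ?_
  have hsum : ij.1 + ij.2 = q := mem_antidiagonal.mp hij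
  have hq : q + 1 - (ij.1 + 1) = ij.2 := by omega
  rw [resolventDerivExpansion, mul_sum, smul_sum]
  refine sum_congr rfl fun c _ => ?_
  have hcoef := Nat.cast_choose_mul_factorial_div (K := K) (show ij.1 + 1 ≤ q + 1 by omega)
    ((c.blocks.map Nat.factorial).prod : ℕ)
  rw [hq] at hcoef
  rw [← Nat.cast_smul_eq_nsmul K, mul_smul_comm, smul_smul, hcoef]
  simp [mul_assoc]

end Expansion

namespace Matrix

variable {𝕂 ι : Type*} [RCLike 𝕂] [Fintype ι] [DecidableEq ι]

noncomputable def mulCLM : Matrix ι ι 𝕂 →L[ℝ] Matrix ι ι 𝕂 →L[ℝ] Matrix ι ι 𝕂 :=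
  LinearMap.toContinuousLinearMap
    (LinearMap.toContinuousLinearMap.toLinearMap ∘ₗ LinearMap.mul ℝ (Matrix ι ι 𝕂))

section Smoothness

variable {N : ℕ} {E : Type*} [NormedAddCommGroup E] [NormedSpace ℝ E] {f : E → Matrix ι ι 𝕂}
  {x : E}

theorem _root_.ContDiffAt.matrix_det (hf : ContDiffAt ℝ N f x) :
    ContDiffAt ℝ N (fun y => (f y).det) x := by
  have hentry : ∀ i j, ContDiffAt ℝ N (fun y => f y i j) x := fun i j =>
    contDiffAt_pi.mp (contDiffAt_pi.mp hf i) j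
  simp only [det_apply, Units.smul_def]
  exact ContDiffAt.sum fun σ _ => (contDiffAt_prod fun i _ => hentry (σ i) i).const_smul _

theorem _root_.ContDiffAt.matrix_adjugate (hf : ContDiffAt ℝ N f x) :
    ContDiffAt ℝ N (fun y => (f y).adjugate) x := by
  refine contDiffAt_pi.mpr fun i => contDiffAt_pi.mpr fun j => ?_
  simp only [adjugate_apply]
  refine ContDiffAt.matrix_det (contDiffAt_pi.mpr fun a => contDiffAt_pi.mpr fun b => ?_)
  by_cases ha : a = j
  · subst ha; simpa [updateRow_apply] using contDiffAt_const
  · simpa [updateRow_apply, ha] using contDiffAt_pi.mp (contDiffAt_pi.mp hf a) b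

theorem _root_.ContDiffAt.matrix_inv (hf : ContDiffAt ℝ N f x) (hx : IsUnit (f x)) :
    ContDiffAt ℝ N (fun y => (f y)⁻¹) x := by
  simp only [inv_def, Ring.inverse_eq_inv']
  exact (hf.matrix_det.inv ((isUnit_iff_isUnit_det _).mp hx).ne_zero).smul hf.matrix_adjugate

end Smoothness

theorem mul_inv_eventuallyEq_one {X : Type*} [TopologicalSpace X] {f : X → Matrix ι ι 𝕂} {x : X}
    (hf : ContinuousAt f x) (hx : IsUnit (f x)) :
    (fun y => f y * (f y)⁻¹) =ᶠ[𝓝 x] fun _ => 1 := by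
  have hdet : ContinuousAt (fun y => (f y).det) x :=
    continuous_id.matrix_det.continuousAt.comp hf
  filter_upwards [hdet.eventually_ne ((isUnit_iff_isUnit_det _).mp hx).ne_zero] with y hy
  exact mul_nonsing_inv _ (isUnit_iff_ne_zero.mpr hy)

theorem iteratedDeriv_mul {k : ℕ} {f g : ℝ → Matrix ι ι 𝕂} {x : ℝ} (hf : ContDiffAt ℝ k f x)
    (hg : ContDiffAt ℝ k g x) :
    iteratedDeriv k (fun y => f y * g y) x =
      ∑ ij ∈ antidiagonal k, k.choose ij.1 • (iteratedDeriv ij.1 f x * iteratedDeriv ij.2 g x) :=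
  mulCLM.iteratedDeriv_of_bilinear hf hg

theorem iteratedDeriv_inv_succ {M : ℝ → Matrix ι ι 𝕂} {x : ℝ} {q : ℕ}
    (hM : ContDiffAt ℝ ↑(q + 1) M x) (hx : IsUnit (M x)) :
    iteratedDeriv (q + 1) (fun t => (M t)⁻¹) x = -∑ ij ∈ antidiagonal q,
      (q + 1).choose (ij.1 + 1) •
        ((M x)⁻¹ * iteratedDeriv (ij.1 + 1) M x * iteratedDeriv ij.2 (fun t => (M t)⁻¹) x) := by
  have hleibniz := iteratedDeriv_mul hM (hM.matrix_inv hx)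
  rw [(mul_inv_eventuallyEq_one hM.continuousAt hx).iteratedDeriv_eq, iteratedDeriv_const,
    Nat.sum_antidiagonal_succ] at hleibniz
  simp only [Nat.add_one_ne_zero, if_false, Nat.choose_zero_right, one_smul,
    iteratedDeriv_zero] at hleibniz
  rw [← nonsing_inv_mul_cancel_left (M x) (iteratedDeriv (q + 1) (fun t => (M t)⁻¹) x)
    ((isUnit_iff_isUnit_det _).mp hx), eq_neg_of_add_eq_zero_left hleibniz.symm, mul_neg, mul_sum]
  simp only [mul_smul_comm, mul_assoc]

theorem iteratedDeriv_resolvent {S : ℝ → Matrix ι ι 𝕂} {N : ℕ} {x : ℝ} (hS : ContDiffAt ℝ N S x)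
    {ζ : 𝕂} (hζ : IsUnit (ζ • 1 - S x)) {p : ℕ} (hp : p ≤ N) :
    iteratedDeriv p (fun t => (ζ • 1 - S t)⁻¹) x =
      resolventDerivExpansion 𝕂 (ζ • 1 - S x)⁻¹ (fun i => iteratedDeriv i S x) p := by
  induction p using Nat.strong_induction_on with
  | _ p ih =>
  rcases p with _ | q
  · rw [resolventDerivExpansion_zero, iteratedDeriv_zero]
  have hM : ContDiffAt ℝ ↑(q + 1) (fun t => ζ • (1 : Matrix ι ι 𝕂) - S t) x :=
    contDiffAt_const.sub (hS.of_le (by exact_mod_cast hp))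
  rw [iteratedDeriv_inv_succ hM hζ, resolventDerivExpansion_succ, ← sum_neg_distrib]
  refine sum_congr rfl fun ij hij => ?_
  have hj : ij.2 < q + 1 := by have := mem_antidiagonal.mp hij; omega
  rw [iteratedDeriv_const_sub (Nat.succ_pos _), iteratedDeriv_neg, ih ij.2 hj (by omega)]
  simp only [mul_neg, neg_mul, smul_neg, neg_neg]

end Matrix

theorem stmt10_general (n m l : ℕ) (hlm : l ≤ m)
    (S T : ℝ → Matrix (Fin n) (Fin n) ℂ)
    (hS : ContDiff ℝ m S) (hT : ContDiff ℝ m T)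
    (t₀ : ℝ) (ζ₁ ζ₂ : ℂ)
    (hζ₁ : IsUnit (ζ₁ • (1 : Matrix (Fin n) (Fin n) ℂ) - S t₀))
    (hζ₂ : IsUnit (ζ₂ • (1 : Matrix (Fin n) (Fin n) ℂ) - T t₀))
    (R₁ R₂ : ℝ → Matrix (Fin n) (Fin n) ℂ)
    (hR₁ : ∀ t, R₁ t = (ζ₁ • (1 : Matrix (Fin n) (Fin n) ℂ) - S t)⁻¹)
    (hR₂ : ∀ t, R₂ t = (ζ₂ • (1 : Matrix (Fin n) (Fin n) ℂ) - T t)⁻¹) :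
    iteratedDeriv l (fun t => R₁ t * R₂ t) t₀ =
      ∑ p ∈ Finset.range (l + 1), ∑ c₁ : Composition p, ∑ c₂ : Composition (l - p),
        ((l.factorial : ℂ) /
            (((c₁.blocks.map Nat.factorial).prod * (c₂.blocks.map Nat.factorial).prod : ℕ) : ℂ)) •
          (R₁ t₀ * (c₁.blocks.map fun i => iteratedDeriv i S t₀ * R₁ t₀).prod *
            (R₂ t₀ * (c₂.blocks.map fun i => iteratedDeriv i T t₀ * R₂ t₀).prod)) := by
  obtain rfl : R₁ = _ := funext hR₁
  obtain rfl : R₂ = _ := funext hR₂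
  beta_reduce
  have hR₁' := (contDiffAt_const.sub hS.contDiffAt).matrix_inv hζ₁
  have hR₂' := (contDiffAt_const.sub hT.contDiffAt).matrix_inv hζ₂
  rw [Matrix.iteratedDeriv_mul (hR₁'.of_le (by exact_mod_cast hlm))
      (hR₂'.of_le (by exact_mod_cast hlm)),
    Nat.sum_antidiagonal_eq_sum_range_succ_mk]
  refine sum_congr rfl fun p hp => ?_
  have hpl : p ≤ l := Nat.lt_succ_iff.mp (mem_range.mp hp)
  rw [Matrix.iteratedDeriv_resolvent hS.contDiffAt hζ₁ (hpl.trans hlm),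
    Matrix.iteratedDeriv_resolvent hT.contDiffAt hζ₂ ((l.sub_le p).trans hlm),
    resolventDerivExpansion, resolventDerivExpansion, sum_mul_sum]
  simp only [smul_sum]
  refine sum_congr rfl fun c₁ _ => sum_congr rfl fun c₂ _ => ?_
  rw [smul_mul_smul_comm, ← Nat.cast_smul_eq_nsmul ℂ, smul_smul, mul_left_comm,
    Nat.cast_choose_mul_factorial_div hpl, Nat.cast_mul]
  congr 1
  have hp : (p.factorial : ℂ) ≠ 0 := Nat.cast_ne_zero.mpr p.factorial_ne_zero
  field_simp

/-- Higher-order derivative of a product of two resolvents: for `C^m`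
curves `S, T` and `R₁ = (ζ₁I − S)⁻¹`, `R₂ = (ζ₂I − T)⁻¹`, the `l`-th derivative of
`R₁R₂` at `t₀` is the sum, over pairs of tuples `(i₁,…,i_k) ∪ (i_{k+1},…,i_j)` of
positive integers with `i₁+ ⋯ + i_j = l` (encoded as a pair of compositions of `p` and
`l − p`), of `(l!/(i₁!⋯i_j!)) R₁ S^{(i₁)} R₁ ⋯ S^{(i_k)} R₁ R₂ T^{(i_{k+1})} R₂ ⋯
T^{(i_j)} R₂`, all evaluated at `t₀`. -/
theorem stmt10 (n m l : ℕ) (hl : 1 ≤ l) (hlm : l ≤ m)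
    (S T : ℝ → Matrix (Fin n) (Fin n) ℂ)
    (hS : ContDiff ℝ m S) (hT : ContDiff ℝ m T)
    (t₀ : ℝ) (ζ₁ ζ₂ : ℂ)
    (hζ₁ : IsUnit (ζ₁ • (1 : Matrix (Fin n) (Fin n) ℂ) - S t₀))
    (hζ₂ : IsUnit (ζ₂ • (1 : Matrix (Fin n) (Fin n) ℂ) - T t₀))
    (R₁ R₂ : ℝ → Matrix (Fin n) (Fin n) ℂ)
    (hR₁ : ∀ t, R₁ t = (ζ₁ • (1 : Matrix (Fin n) (Fin n) ℂ) - S t)⁻¹)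
    (hR₂ : ∀ t, R₂ t = (ζ₂ • (1 : Matrix (Fin n) (Fin n) ℂ) - T t)⁻¹) :
    iteratedDeriv l (fun t => R₁ t * R₂ t) t₀ =
      ∑ p ∈ Finset.range (l + 1), ∑ c₁ : Composition p, ∑ c₂ : Composition (l - p),
        ((l.factorial : ℂ) /
            (((c₁.blocks.map Nat.factorial).prod * (c₂.blocks.map Nat.factorial).prod : ℕ) : ℂ)) •
          (R₁ t₀ * (c₁.blocks.map fun i => iteratedDeriv i S t₀ * R₁ t₀).prod *
            (R₂ t₀ * (c₂.blocks.map fun i => iteratedDeriv i T t₀ * R₂ t₀).prod)) :=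
  stmt10_general n m l hlm S T hS hT t₀ ζ₁ ζ₂ hζ₁ hζ₂ R₁ R₂ hR₁ hR₂
end

section
/- Two-variable mean value theorem for divided differences: if f ∈ C^m on a product of open intervals, then for k ≤ j ≤ m and points x_1,...,x_{k+1}, y_1,...,y_{j−k+1} lying in closed subintervals J̃_1, J̃_2, there exists (x*, y*) ∈ J̃_1 × J̃_2 with f^{[k,j−k]}(x_1,...,x_{k+1}; y_1,...,y_{j−k+1}) = f^{(k,j−k)}(x*,y*) / (k!(j−k)!). -/
/-!
The divided difference of `f` in both variables is an iterated one-variable divided difference: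
first in `x` at fixed second argument, then in `y`. The one-variable mean value theorem
`divDiff g x = g⁽ⁿ⁾(ξ) / n!` follows from Rolle's theorem applied `n` times to `g` minus its
Lagrange interpolation polynomial, whose `n`-th derivative is the constant `n! * divDiff g x`.
Applied in `y` to `v ↦ divDiff (f · v) x`, whose `l`-th derivative is `divDiff (∂_y^l f (·, ys)) x`,
and then in `x` to `u ↦ ∂_y^l f (u, ys)`, it produces the point `(xs, ys)`.
-/

open Set Finset

/-- Two-variable divided difference of `f`, taken at the (distinct) points
`x 0, ..., x k` in the first variable and `y 0, ..., y l` in the second. -/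
noncomputable def divDiff2 {k l : ℕ} (f : ℝ → ℝ → ℝ)
    (x : Fin (k + 1) → ℝ) (y : Fin (l + 1) → ℝ) : ℝ :=
  ∑ q, ∑ r, f (x q) (y r) /
    ((∏ p ∈ univ.erase q, (x q - x p)) * ∏ s ∈ univ.erase r, (y r - y s))

section PartialDerivatives

variable {𝕜 E F G : Type*} [NontriviallyNormedField 𝕜] [NormedAddCommGroup E] [NormedSpace 𝕜 E]
  [NormedAddCommGroup F] [NormedSpace 𝕜 F] [NormedAddCommGroup G] [NormedSpace 𝕜 G]
  {n m : WithTop ℕ∞}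

theorem ContDiffAt.curry_left {f : E → F → G} {u : E} {v : F}
    (hf : ContDiffAt 𝕜 n (Function.uncurry f) (u, v)) : ContDiffAt 𝕜 n (fun u => f u v) u :=
  hf.comp u (contDiffAt_id.prodMk contDiffAt_const)

theorem ContDiffAt.curry_right {f : E → F → G} {u : E} {v : F}
    (hf : ContDiffAt 𝕜 n (Function.uncurry f) (u, v)) : ContDiffAt 𝕜 n (f u) v :=
  hf.comp v (contDiffAt_const.prodMk contDiffAt_id)

theorem ContDiffAt.deriv_snd {f : E → 𝕜 → F} {p : E × 𝕜}
    (hf : ContDiffAt 𝕜 (n + 1) (Function.uncurry f) p) :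
    ContDiffAt 𝕜 n (fun q : E × 𝕜 => deriv (f q.1) q.2) p := by
  have hF : ContDiffAt 𝕜 (n + 1) (Function.uncurry fun q : E × 𝕜 => f q.1) (p, p.2) :=
    hf.comp (p, p.2) (contDiffAt_fst.fst.prodMk contDiffAt_snd)
  exact (hF.fderiv contDiffAt_snd le_rfl).clm_apply contDiffAt_const

theorem ContDiffAt.iteratedDeriv_snd {f : E → 𝕜 → F} {p : E × 𝕜} (l : ℕ)
    (hf : ContDiffAt 𝕜 m (Function.uncurry f) p) (hnm : n + l ≤ m) :
    ContDiffAt 𝕜 n (fun q : E × 𝕜 => iteratedDeriv l (f q.1) q.2) p := by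
  induction l generalizing n with
  | zero => exact hf.of_le (by simpa using hnm)
  | succ l ih =>
    simp only [iteratedDeriv_succ]
    exact ContDiffAt.deriv_snd (f := fun u => iteratedDeriv l (f u))
      (ih (by rw [add_right_comm, add_assoc]; exact_mod_cast hnm))

end PartialDerivatives

noncomputable def divDiff {n : ℕ} (g : ℝ → ℝ) (x : Fin (n + 1) → ℝ) : ℝ :=
  ∑ q, g (x q) / ∏ p ∈ univ.erase q, (x q - x p)

open Polynomial in
theorem iterate_derivative_interpolate_eq_divDiff {n : ℕ} (g : ℝ → ℝ) {x : Fin (n + 1) → ℝ}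
    (hx : Function.Injective x) :
    derivative^[n] (Lagrange.interpolate univ x (g ∘ x)) = C (n.factorial * divDiff g x) := by
  rw [Lagrange.iterate_derivative_interpolate _ hx.injOn (by simp)]
  simp [divDiff, mul_sum]

open Polynomial in
theorem iteratedDeriv_polynomial_eval {𝕜 : Type*} [NontriviallyNormedField 𝕜] (P : 𝕜[X]) (n : ℕ) :
    iteratedDeriv n (fun t => P.eval t) = fun t => (derivative^[n] P).eval t := by
  induction n generalizing P with
  | zero => rfl
  | succ n ih =>
    rw [iteratedDeriv_succ', Function.iterate_succ_apply, ← ih]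
    exact congrArg _ (funext fun t => P.deriv)

section MeanValue

variable {U : Set ℝ} {c d : ℝ}

theorem exists_iteratedDeriv_eq_zero_of_strictMono (hU : IsOpen U) (hcd : Icc c d ⊆ U) {n : ℕ}
    {h : ℝ → ℝ} (hh : ContDiffOn ℝ n h U) {x : Fin (n + 1) → ℝ} (hx : StrictMono x)
    (hxcd : ∀ q, x q ∈ Icc c d) (hzero : ∀ q, h (x q) = 0) :
    ∃ ξ ∈ Icc c d, iteratedDeriv n h ξ = 0 := by
  induction n generalizing h with
  | zero => exact ⟨x 0, hxcd 0, hzero 0⟩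
  | succ n ih =>
    have hrolle : ∀ i : Fin (n + 1), ∃ ξ ∈ Ioo (x i.castSucc) (x i.succ), deriv h ξ = 0 := by
      intro i
      have hsub : Icc (x i.castSucc) (x i.succ) ⊆ U :=
        (Icc_subset_Icc (hxcd _).1 (hxcd _).2).trans hcd
      exact exists_deriv_eq_zero (hx i.castSucc_lt_succ)
        (hh.continuousOn.mono hsub) ((hzero _).trans (hzero _).symm)
    choose y hy hy_zero using hrolle
    have hy_mono : StrictMono y := Fin.strictMono_iff_lt_succ.2 fun i =>
      (hy i.castSucc).2.trans_le (by rw [Fin.succ_castSucc]) |>.trans (hy i.succ).1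
    obtain ⟨ξ, hξ, hξ_zero⟩ := ih (hh.deriv_of_isOpen hU (by norm_cast)) hy_mono
      (fun i => ⟨(hxcd _).1.trans (hy i).1.le, (hy i).2.le.trans (hxcd _).2⟩) hy_zero
    exact ⟨ξ, hξ, by rwa [iteratedDeriv_succ']⟩

theorem exists_iteratedDeriv_eq_zero_of_injective (hU : IsOpen U) (hcd : Icc c d ⊆ U) {n : ℕ}
    {h : ℝ → ℝ} (hh : ContDiffOn ℝ n h U) {x : Fin (n + 1) → ℝ} (hx : Function.Injective x)
    (hxcd : ∀ q, x q ∈ Icc c d) (hzero : ∀ q, h (x q) = 0) :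
    ∃ ξ ∈ Icc c d, iteratedDeriv n h ξ = 0 :=
  exists_iteratedDeriv_eq_zero_of_strictMono hU hcd hh
    ((Tuple.monotone_sort x).strictMono_of_injective (hx.comp (Tuple.sort x).injective))
    (fun _ => hxcd _) (fun _ => hzero _)

open Polynomial in
theorem exists_divDiff_eq_iteratedDeriv_div_factorial (hU : IsOpen U) (hcd : Icc c d ⊆ U)
    {n : ℕ} {g : ℝ → ℝ} (hg : ContDiffOn ℝ n g U) {x : Fin (n + 1) → ℝ}
    (hx : Function.Injective x) (hxcd : ∀ q, x q ∈ Icc c d) :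
    ∃ ξ ∈ Icc c d, divDiff g x = iteratedDeriv n g ξ / n.factorial := by
  set P := Lagrange.interpolate univ x (g ∘ x)
  have hP : ContDiff ℝ n fun t => P.eval t := by simpa using P.contDiff_aeval (𝕜 := ℝ) n
  obtain ⟨ξ, hξ, hξ_zero⟩ := exists_iteratedDeriv_eq_zero_of_injective hU hcd
    (hg.sub hP.contDiffOn) hx hxcd
    fun q => sub_eq_zero.2 (Lagrange.eval_interpolate_at_node (g ∘ x) hx.injOn (mem_univ q)).symm
  refine ⟨ξ, hξ, ?_⟩
  have hPn : derivative^[n] P = C (n.factorial * divDiff g x) :=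
    iterate_derivative_interpolate_eq_divDiff g hx
  simp only [iteratedDeriv_fun_sub ((hg ξ (hcd hξ)).contDiffAt (hU.mem_nhds (hcd hξ)))
    hP.contDiffAt, iteratedDeriv_polynomial_eval, hPn, eval_C, sub_eq_zero] at hξ_zero
  rw [hξ_zero, mul_div_cancel_left₀ _ (by positivity)]

end MeanValue

theorem divDiff2_eq_divDiff_divDiff {k l : ℕ} (f : ℝ → ℝ → ℝ) (x : Fin (k + 1) → ℝ)
    (y : Fin (l + 1) → ℝ) : divDiff2 f x y = divDiff (fun v => divDiff (f · v) x) y := by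
  simp only [divDiff2, divDiff, Finset.sum_div, div_div]
  exact Finset.sum_comm

theorem contDiffOn_divDiff_snd {k n : ℕ} {f : ℝ → ℝ → ℝ} {x : Fin (k + 1) → ℝ} {U : Set ℝ}
    (hf : ∀ q, ContDiffOn ℝ n (f (x q)) U) :
    ContDiffOn ℝ n (fun v => divDiff (f · v) x) U :=
  ContDiffOn.sum fun q _ => (hf q).div_const _

theorem iteratedDeriv_divDiff_snd {k n : ℕ} {f : ℝ → ℝ → ℝ} {x : Fin (k + 1) → ℝ} {t : ℝ}
    (hf : ∀ q, ContDiffAt ℝ n (f (x q)) t) :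
    iteratedDeriv n (fun v => divDiff (f · v) x) t =
      divDiff (fun u => iteratedDeriv n (f u) t) x := by
  simp only [divDiff, iteratedDeriv_fun_sum fun q _ => (hf q).div_const _, iteratedDeriv_div_const]

/-- Two-variable mean value theorem for divided differences: if `f` is
`C^m` on `J₁ × J₂` and `k + l ≤ m`, then for distinct points `x_1, ..., x_{k+1} ∈ J̃₁`
and `y_1, ..., y_{l+1} ∈ J̃₂` lying in closed subintervals, there is
`(x*, y*) ∈ J̃₁ × J̃₂` with
`f^{[k,l]}(x; y) = f^{(k,l)}(x*, y*) / (k! l!)`. -/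
theorem stmt12 (a₁ b₁ a₂ b₂ : ℝ) (J₁ J₂ : Set ℝ)
    (hJ₁ : J₁ = Ioo a₁ b₁) (hJ₂ : J₂ = Ioo a₂ b₂)
    (m k l : ℕ) (hkl : k + l ≤ m)
    (f : ℝ → ℝ → ℝ)
    (hf : ContDiffOn ℝ m (fun p : ℝ × ℝ => f p.1 p.2) (J₁ ×ˢ J₂))
    (c₁ d₁ c₂ d₂ : ℝ) (hsub₁ : Icc c₁ d₁ ⊆ J₁) (hsub₂ : Icc c₂ d₂ ⊆ J₂)
    (x : Fin (k + 1) → ℝ) (y : Fin (l + 1) → ℝ)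
    (hxinj : Function.Injective x) (hyinj : Function.Injective y)
    (hx : ∀ q, x q ∈ Icc c₁ d₁) (hy : ∀ r, y r ∈ Icc c₂ d₂) :
    ∃ xs ∈ Icc c₁ d₁, ∃ ys ∈ Icc c₂ d₂,
      divDiff2 f x y =
        iteratedDeriv k (fun u => iteratedDeriv l (f u) ys) xs /
          (Nat.factorial k * Nat.factorial l) := by
  subst hJ₁ hJ₂
  have hfAt : ∀ u ∈ Ioo a₁ b₁, ∀ v ∈ Ioo a₂ b₂,
      ContDiffAt ℝ (k + l : ℕ) (Function.uncurry f) (u, v) := fun u hu v hv =>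
    (hf.of_le (by exact_mod_cast hkl)).contDiffAt
      ((isOpen_Ioo.prod isOpen_Ioo).mem_nhds ⟨hu, hv⟩)
  have hslice : ∀ q, ∀ v ∈ Ioo a₂ b₂, ContDiffAt ℝ l (f (x q)) v := fun q v hv =>
    (hfAt _ (hsub₁ (hx q)) v hv).curry_right.of_le (by norm_cast; omega)
  obtain ⟨ys, hys, hy_eq⟩ := exists_divDiff_eq_iteratedDeriv_div_factorial isOpen_Ioo hsub₂
    (contDiffOn_divDiff_snd fun q v hv => (hslice q v hv).contDiffWithinAt) hyinj hy
  obtain ⟨xs, hxs, hx_eq⟩ := exists_divDiff_eq_iteratedDeriv_div_factorial isOpen_Ioo hsub₁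
    (fun u hu => (ContDiffAt.curry_left (f := fun u v => iteratedDeriv l (f u) v)
      ((hfAt u hu ys (hsub₂ hys)).iteratedDeriv_snd l (n := k) (by norm_cast))).contDiffWithinAt)
    hxinj hx
  refine ⟨xs, hxs, ys, hys, ?_⟩
  rw [divDiff2_eq_divDiff_divDiff, hy_eq,
    iteratedDeriv_divDiff_snd fun q => hslice q ys (hsub₂ hys), hx_eq, div_div]
end

section
/- Eigenvalues of a Lipschitz curve of commuting self-adjoint matrices are Lipschitz as an unordered tuple: if S(t) is Lipschitz in CS^d_n on an interval I, then there exist Lipschitz functions x_1(t),...,x_n(t): I → ℝ^d with σ(S(t)) = {x_i(t) : 1 ≤ i ≤ n} for all t. -/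
/-!
Write `A = U diag(a) U*` and `B = V diag(b) V*` with `U, V` unitary and `W = U* V`. Then
`‖A - B‖_F² = ∑_{p,q} |W_pq|² |a_p - b_q|²`, and `(|W_pq|²)` is doubly stochastic, so by Birkhoff's
theorem some permutation `σ` has `∑_p |a_p - b_{σ p}|² ≤ ‖A - B‖_F²` (Hoffman–Wielandt); the same
`W` works for all `d` commuting matrices at once. Hence the finite sets `E t` of enumerations of
the joint spectrum of `S t` satisfy: every point of `E t` lies within `C |t - s|` of some point
of `E s`, where `C = √d n K` comes from bounding `‖S t - S s‖_F` entrywise. A `C`-Lipschitz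
selection of `E` is built greedily from left to right on any finite set of times, and Tychonoff's
theorem applied to `∏ t, E t` passes to all of `I`.
-/

open Finset Matrix Module NNReal

theorem exists_perm_sum_le_of_mem_doublyStochastic {m : Type*} [Fintype m] [DecidableEq m]
    {M : Matrix m m ℝ} (hM : M ∈ doublyStochastic ℝ m) (c : m → m → ℝ) :
    ∃ σ : Equiv.Perm m, ∑ p, c p (σ p) ≤ ∑ p, ∑ q, M p q * c p q := by
  let f : Matrix m m ℝ →ₗ[ℝ] ℝ :=
    { toFun := fun N => ∑ p, ∑ q, N p q * c p q
      map_add' := fun N N' => by simp only [Matrix.add_apply, add_mul, sum_add_distrib]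
      map_smul' := fun a N => by
        simp only [Matrix.smul_apply, smul_eq_mul, mul_sum, mul_assoc, RingHom.id_apply] }
  have hM' : M ∈ convexHull ℝ {σ.permMatrix ℝ | σ : Equiv.Perm m} := by
    rw [← doublyStochastic_eq_convexHull_permMatrix]; exact hM
  obtain ⟨_, ⟨σ, rfl⟩, hσ⟩ :=
    (f.concaveOn convex_univ).exists_le_of_mem_convexHull (Set.subset_univ _) hM'
  refine ⟨σ, le_trans (le_of_eq ?_) hσ⟩
  simp [f, Equiv.toPEquiv_apply, PEquiv.toMatrix_apply]

theorem LinearMap.IsSymmetric.exists_orthonormalBasis_apply_eq_smul_of_commute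
    {𝕜 E ι m : Type*} [RCLike 𝕜] [NormedAddCommGroup E] [InnerProductSpace 𝕜 E]
    [FiniteDimensional 𝕜 E] [Fintype m] {T : ι → E →ₗ[𝕜] E} (hT : ∀ r, (T r).IsSymmetric)
    (hC : Pairwise (Function.onFun Commute T)) (hm : finrank 𝕜 E = Fintype.card m) :
    ∃ (b : OrthonormalBasis m 𝕜 E) (χ : m → ι → ℝ), ∀ j r, T r (b j) = (χ j r : 𝕜) • b j := by
  classical
  set V : (ι → 𝕜) → Submodule 𝕜 E := fun χ => ⨅ r, End.eigenspace (T r) (χ r)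
  have hV : DirectSum.IsInternal V := directSum_isInternal_of_pairwise_commute hT hC
  have : Finite {χ // V χ ≠ ⊥} :=
    WellFoundedGT.finite_ne_bot_of_iSupIndep hV.submodule_iSupIndep
  have : Fintype {χ // V χ ≠ ⊥} := Fintype.ofFinite _
  have hV' := DirectSum.isInternal_ne_bot_iff.2 hV
  have hO := (orthogonalFamily_iInf_eigenspaces hT).comp
    (Subtype.val_injective : Function.Injective (Subtype.val : {χ // V χ ≠ ⊥} → _))
  let b₀ := hV'.collectedOrthonormalBasis hO fun χ => stdOrthonormalBasis 𝕜 (V χ)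
  let e := Fintype.equivOfCardEq ((finrank_eq_card_basis b₀.toBasis).symm.trans hm)
  let b := b₀.reindex e
  have hb : ∀ j r, T r (b j) = (e.symm j).1.1 r • b j := by
    intro j r
    have hmem : b j ∈ V (e.symm j).1 := by
      simpa [b] using hV'.collectedOrthonormalBasis_mem hO _ (e.symm j)
    exact End.mem_eigenspace_iff.1 ((Submodule.mem_iInf _).1 hmem r)
  refine ⟨b, fun j r => RCLike.re ((e.symm j).1.1 r), fun j r => ?_⟩
  have hreal := (hT r).conj_eigenvalue_eq_self <| End.hasEigenvalue_of_hasEigenvector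
    ⟨End.mem_eigenspace_iff.2 (hb j r), b.orthonormal.ne_zero j⟩
  rw [hb, RCLike.conj_eq_iff_re.1 hreal]

namespace Matrix

variable {𝕜 m : Type*} [RCLike 𝕜] [Fintype m]

theorem conjTranspose_mul_self_apply_self {n : Type*} (X : Matrix m n 𝕜) (q : n) :
    (Xᴴ * X) q q = ((∑ p, ‖X p q‖ ^ 2 : ℝ) : 𝕜) := by
  simp [mul_apply, RCLike.conj_mul]

theorem sum_sum_norm_sq_eq_re_trace (X : Matrix m m 𝕜) :
    ∑ p, ∑ q, ‖X p q‖ ^ 2 = RCLike.re (trace (Xᴴ * X)) := by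
  simp only [trace, Matrix.diag, conjTranspose_mul_self_apply_self, map_sum, RCLike.ofReal_re]
  exact Finset.sum_comm

variable [DecidableEq m]

theorem sum_sum_norm_sq_unitary_mul_mul {U V : Matrix m m 𝕜} (hU : U ∈ unitaryGroup m 𝕜)
    (hV : V ∈ unitaryGroup m 𝕜) (X : Matrix m m 𝕜) :
    ∑ p, ∑ q, ‖(U * X * V) p q‖ ^ 2 = ∑ p, ∑ q, ‖X p q‖ ^ 2 := by
  have hU' : Uᴴ * U = 1 := mem_unitaryGroup_iff'.1 hU
  have hV' : V * Vᴴ = 1 := mem_unitaryGroup_iff.1 hV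
  rw [sum_sum_norm_sq_eq_re_trace, sum_sum_norm_sq_eq_re_trace, conjTranspose_mul,
    conjTranspose_mul]
  congr 1
  calc trace (Vᴴ * (Xᴴ * Uᴴ) * (U * X * V)) = trace (Vᴴ * (Xᴴ * X) * V) := by
        simp only [Matrix.mul_assoc, ← Matrix.mul_assoc Uᴴ U, hU', Matrix.one_mul]
    _ = trace (Xᴴ * X) := by
        rw [trace_mul_cycle, hV', Matrix.one_mul]

theorem of_norm_sq_mem_doublyStochastic_of_mem_unitaryGroup {W : Matrix m m 𝕜}
    (hW : W ∈ unitaryGroup m 𝕜) :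
    (of fun p q => ‖W p q‖ ^ 2) ∈ doublyStochastic ℝ m := by
  have hcol : ∀ X ∈ unitaryGroup m 𝕜, ∀ q, ∑ p, ‖X p q‖ ^ 2 = 1 := by
    intro X hX q
    have h := congrFun₂ (mem_unitaryGroup_iff'.1 hX) q q
    rw [star_eq_conjTranspose, conjTranspose_mul_self_apply_self, one_apply_eq] at h
    exact_mod_cast h
  refine mem_doublyStochastic_iff_sum.2 ⟨fun _ _ => sq_nonneg _, fun p => ?_, hcol W hW⟩
  simpa [norm_star] using hcol _ (Unitary.star_mem hW) p

theorem sum_sum_norm_sq_conj_diagonal_sub {U V : Matrix m m 𝕜} (hU : U ∈ unitaryGroup m 𝕜)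
    (hV : V ∈ unitaryGroup m 𝕜) (a b : m → ℝ) :
    ∑ p, ∑ q, ‖(U * diagonal (fun i => (a i : 𝕜)) * star U
        - V * diagonal (fun i => (b i : 𝕜)) * star V) p q‖ ^ 2
      = ∑ p, ∑ q, ‖(star U * V) p q‖ ^ 2 * (a p - b q) ^ 2 := by
  have hfactor : U * diagonal (fun i => (a i : 𝕜)) * star U
        - V * diagonal (fun i => (b i : 𝕜)) * star V
      = U * (diagonal (fun i => (a i : 𝕜)) * (star U * V)
        - (star U * V) * diagonal (fun i => (b i : 𝕜))) * star V := by
    simp only [Matrix.mul_sub, Matrix.sub_mul, Matrix.mul_assoc,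
      mem_unitaryGroup_iff.1 hV, Matrix.mul_one]
    simp only [← Matrix.mul_assoc, mem_unitaryGroup_iff.1 hU, Matrix.one_mul]
  rw [hfactor, sum_sum_norm_sq_unitary_mul_mul hU (Unitary.star_mem hV)]
  refine sum_congr rfl fun p _ => sum_congr rfl fun q _ => ?_
  rw [Matrix.sub_apply, diagonal_mul, mul_diagonal, mul_comm _ (b q : 𝕜), ← sub_mul,
    ← RCLike.ofReal_sub, norm_mul, RCLike.norm_ofReal, mul_pow, sq_abs, mul_comm]

/-- The enumerations `v : m → ℝ^ι` of the joint spectrum of `A`, with multiplicity. -/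
def jointSpectrumEnumerations {ι : Type*} (A : ι → Matrix m m 𝕜) : Set (m → ι → ℝ) :=
  {v | ∃ U ∈ unitaryGroup m 𝕜, ∀ r, A r = U * diagonal (fun i => (v i r : 𝕜)) * star U}

variable {ι : Type*}

theorem mem_jointSpectrumEnumerations_of_mulVec_eq_smul
    (b : OrthonormalBasis m 𝕜 (EuclideanSpace 𝕜 m)) {A : ι → Matrix m m 𝕜} {v : m → ι → ℝ}
    (h : ∀ j r, A r *ᵥ ⇑(b j) = (v j r : 𝕜) • ⇑(b j)) :
    v ∈ jointSpectrumEnumerations A := by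
  set U := (EuclideanSpace.basisFun m 𝕜).toBasis.toMatrix b.toBasis
  have hU : U ∈ unitaryGroup m 𝕜 :=
    (EuclideanSpace.basisFun m 𝕜).toMatrix_orthonormalBasis_mem_unitary b
  have hUij : ∀ i j, U i j = b j i := by simp [U, Module.Basis.toMatrix_apply]
  refine ⟨U, hU, fun r => ?_⟩
  have hAU : A r * U = U * diagonal (fun i => (v i r : 𝕜)) := by
    ext i j
    calc (A r * U) i j = (A r *ᵥ ⇑(b j)) i := by simp [mul_apply, mulVec, dotProduct, hUij]
      _ = (U * diagonal (fun i => (v i r : 𝕜))) i j := by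
        rw [h, mul_diagonal, hUij, Pi.smul_apply, smul_eq_mul, mul_comm]
  rw [← hAU, Matrix.mul_assoc, mem_unitaryGroup_iff.1 hU, Matrix.mul_one]

theorem nonempty_jointSpectrumEnumerations {A : ι → Matrix m m 𝕜}
    (hA : ∀ r, (A r).IsHermitian) (hC : Pairwise (Function.onFun Commute A)) :
    (jointSpectrumEnumerations A).Nonempty := by
  obtain ⟨b, v, hb⟩ :=
    LinearMap.IsSymmetric.exists_orthonormalBasis_apply_eq_smul_of_commute
      (T := fun r => toEuclideanLin (A r)) (fun r => isSymmetric_toEuclideanLin_iff.2 (hA r))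
      (fun r s hrs => (hC hrs).map (toLpLinAlgEquiv 2)) (finrank_euclideanSpace (𝕜 := 𝕜))
  exact ⟨v, mem_jointSpectrumEnumerations_of_mulVec_eq_smul b fun j r =>
    congrArg WithLp.ofLp (hb j r)⟩

theorem comp_perm_mem_jointSpectrumEnumerations {A : ι → Matrix m m 𝕜} {v : m → ι → ℝ}
    (hv : v ∈ jointSpectrumEnumerations A) (σ : Equiv.Perm m) :
    v ∘ σ ∈ jointSpectrumEnumerations A := by
  obtain ⟨U, hU, hA⟩ := hv
  set P : Matrix m m 𝕜 := σ.permMatrix 𝕜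
  have hP : P ∈ unitaryGroup m 𝕜 := mem_unitaryGroup_iff.2 (by
    rw [star_eq_conjTranspose]; simp [P, ← permMatrix_mul])
  refine ⟨U * Pᴴ, mul_mem hU (Unitary.star_mem hP), fun r => ?_⟩
  have hdiag : diagonal (fun i => (v i r : 𝕜))
      = Pᴴ * diagonal (fun i => (v (σ i) r : 𝕜)) * P := by
    simp only [P, conjTranspose_permMatrix, PEquiv.toMatrix_toPEquiv_mul,
      PEquiv.mul_toMatrix_toPEquiv, submatrix_submatrix, Function.id_comp, Function.comp_id]
    rw [Equiv.Perm.inv_def, submatrix_diagonal_equiv]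
    simp [Function.comp_def]
  rw [hA r, hdiag, star_mul, star_eq_conjTranspose Pᴴ, conjTranspose_conjTranspose]
  simp only [Matrix.mul_assoc]
  rfl

variable [Fintype ι]

theorem exists_perm_sum_sum_sq_le_of_mem_jointSpectrumEnumerations {A B : ι → Matrix m m 𝕜}
    {v w : m → ι → ℝ} (hv : v ∈ jointSpectrumEnumerations A)
    (hw : w ∈ jointSpectrumEnumerations B) :
    ∃ σ : Equiv.Perm m, ∑ i, ∑ r, (v i r - w (σ i) r) ^ 2
      ≤ ∑ r, ∑ p, ∑ q, ‖(A r - B r) p q‖ ^ 2 := by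
  obtain ⟨U, hU, hA⟩ := hv
  obtain ⟨V, hV, hB⟩ := hw
  obtain ⟨σ, hσ⟩ := exists_perm_sum_le_of_mem_doublyStochastic
    (of_norm_sq_mem_doublyStochastic_of_mem_unitaryGroup
      (mul_mem (Unitary.star_mem hU) hV))
    (fun p q => ∑ r, (v p r - w q r) ^ 2)
  refine ⟨σ, hσ.trans (le_of_eq ?_)⟩
  simp only [hA, hB, sum_sum_norm_sq_conj_diagonal_sub hU hV, of_apply, mul_sum]
  exact (sum_congr rfl fun _ _ => Finset.sum_comm).trans Finset.sum_comm

theorem exists_perm_dist_le_of_mem_jointSpectrumEnumerations {A B : ι → Matrix m m 𝕜}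
    {v w : m → ι → ℝ} (hv : v ∈ jointSpectrumEnumerations A)
    (hw : w ∈ jointSpectrumEnumerations B) {δ : ℝ} (hδ₀ : 0 ≤ δ)
    (hδ : ∀ r p q, ‖(A r - B r) p q‖ ≤ δ) :
    ∃ σ : Equiv.Perm m, dist v (w ∘ σ) ≤ √(Fintype.card ι) * Fintype.card m * δ := by
  obtain ⟨σ, hσ⟩ := exists_perm_sum_sum_sq_le_of_mem_jointSpectrumEnumerations hv hw
  have hC₀ : 0 ≤ √(Fintype.card ι) * Fintype.card m * δ := by positivity
  refine ⟨σ, (dist_pi_le_iff hC₀).2 fun i => (dist_pi_le_iff hC₀).2 fun r => ?_⟩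
  rw [Real.dist_eq]
  refine abs_le_of_sq_le_sq ?_ hC₀
  calc (v i r - w (σ i) r) ^ 2 ≤ ∑ r', (v i r' - w (σ i) r') ^ 2 :=
        single_le_sum (f := fun r' => (v i r' - w (σ i) r') ^ 2) (fun _ _ => sq_nonneg _)
          (mem_univ r)
    _ ≤ ∑ i', ∑ r', (v i' r' - w (σ i') r') ^ 2 :=
        single_le_sum (f := fun i' => ∑ r', (v i' r' - w (σ i') r') ^ 2)
          (fun _ _ => sum_nonneg fun _ _ => sq_nonneg _) (mem_univ i)
    _ ≤ ∑ r, ∑ p, ∑ q, ‖(A r - B r) p q‖ ^ 2 := hσ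
    _ ≤ ∑ r : ι, ∑ p : m, ∑ q : m, δ ^ 2 := by
        gcongr with r _ p _ q _
        exact hδ r p q
    _ = (√(Fintype.card ι) * Fintype.card m * δ) ^ 2 := by
        simp only [sum_const, card_univ, nsmul_eq_mul, mul_pow, Nat.cast_nonneg,
          Real.sq_sqrt]
        ring

theorem finite_jointSpectrumEnumerations (A : ι → Matrix m m 𝕜) :
    (jointSpectrumEnumerations A).Finite := by
  rcases (jointSpectrumEnumerations A).eq_empty_or_nonempty with h | ⟨v₀, hv₀⟩
  · rw [h]; exact Set.finite_empty
  -- any two enumerations differ by a permutation: take `B = A` above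
  refine (Set.finite_range fun σ : Equiv.Perm m => v₀ ∘ σ).subset fun v hv => ?_
  obtain ⟨σ, hσ⟩ := exists_perm_dist_le_of_mem_jointSpectrumEnumerations hv hv₀ le_rfl
    (fun r p q => by simp)
  exact ⟨σ, (dist_le_zero.1 (by simpa using hσ)).symm⟩

end Matrix

section LipschitzSelection

variable {X : Type*} [PseudoMetricSpace X] {I : Set ℝ} {E : I → Set X} {K : ℝ≥0}

theorem exists_selection_dist_le_on_finset (hne : ∀ t, (E t).Nonempty)
    (hmatch : ∀ t s, ∀ v ∈ E t, ∃ w ∈ E s, dist v w ≤ K * dist t s) (F : Finset I) :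
    ∃ f : I → X, (∀ t, f t ∈ E t) ∧ ∀ t ∈ F, ∀ s ∈ F, dist (f t) (f s) ≤ K * dist t s := by
  induction F using Finset.induction_on_max with
  | empty => exact ⟨fun t => (hne t).some, fun t => (hne t).some_mem, by simp⟩
  | insert a F ha IH =>
    obtain ⟨f, hfE, hfF⟩ := IH
    rcases F.eq_empty_or_nonempty with rfl | hF
    · exact ⟨f, hfE, by simp⟩
    set m := F.max' hF
    obtain ⟨w, hw, hmw⟩ := hmatch m a (f m) (hfE m)
    have hw_near : ∀ t ∈ F, dist (f t) w ≤ K * dist t a := by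
      intro t ht
      have htm : (t : ℝ) ≤ m := F.le_max' t ht
      have hma : (m : ℝ) ≤ a := (ha m (F.max'_mem hF)).le
      have hcollinear : dist t m + dist m a = dist t a := by
        simp only [Subtype.dist_eq, Real.dist_eq]
        rw [abs_of_nonpos (sub_nonpos.2 htm), abs_of_nonpos (sub_nonpos.2 hma),
          abs_of_nonpos (sub_nonpos.2 (htm.trans hma))]
        ring
      calc dist (f t) w ≤ dist (f t) (f m) + dist (f m) w := dist_triangle _ _ _
        _ ≤ K * dist t m + K * dist m a := add_le_add (hfF t ht m (F.max'_mem hF)) hmw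
        _ = K * dist t a := by rw [← mul_add, hcollinear]
    have hne_a : ∀ t ∈ F, t ≠ a := fun t ht => (ha t ht).ne
    refine ⟨Function.update f a w, fun t => ?_, fun t ht s hs => ?_⟩
    · rcases eq_or_ne t a with rfl | hta
      · simpa using hw
      · simpa [hta] using hfE t
    rcases mem_insert.1 ht with hta | ht <;> rcases mem_insert.1 hs with hsa | hs
    · simp [hta, hsa]
    · rw [hta, Function.update_self, Function.update_of_ne (hne_a s hs), dist_comm, dist_comm a]
      exact hw_near s hs
    · rw [hsa, Function.update_self, Function.update_of_ne (hne_a t ht)]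
      exact hw_near t ht
    · rw [Function.update_of_ne (hne_a t ht), Function.update_of_ne (hne_a s hs)]
      exact hfF t ht s hs

theorem exists_lipschitzWith_selection (hfin : ∀ t, (E t).Finite) (hne : ∀ t, (E t).Nonempty)
    (hmatch : ∀ t s, ∀ v ∈ E t, ∃ w ∈ E s, dist v w ≤ K * dist t s) :
    ∃ f : I → X, (∀ t, f t ∈ E t) ∧ LipschitzWith K f := by
  let Z : I × I → Set (I → X) := fun p => {f | dist (f p.1) (f p.2) ≤ K * dist p.1 p.2}
  have hZ : ∀ p, IsClosed (Z p) := fun p => isClosed_le (by fun_prop) continuous_const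
  have hcpt : IsCompact (Set.univ.pi E) := isCompact_univ_pi fun t => (hfin t).isCompact
  obtain ⟨f, hfE, hfZ⟩ := hcpt.inter_iInter_nonempty Z hZ fun u => by
    obtain ⟨f, hfE, hf⟩ :=
      exists_selection_dist_le_on_finset hne hmatch (u.image Prod.fst ∪ u.image Prod.snd)
    refine ⟨f, fun t _ => hfE t, Set.mem_iInter₂.2 fun p hp => hf _ ?_ _ ?_⟩
    · exact mem_union_left _ (mem_image_of_mem _ hp)
    · exact mem_union_right _ (mem_image_of_mem _ hp)
  exact ⟨f, fun t => hfE t trivial,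
    LipschitzWith.of_dist_le_mul fun t s => Set.mem_iInter.1 hfZ (t, s)⟩

end LipschitzSelection

theorem stmt14_general (d n : ℕ) (I : Set ℝ)
    (S : ℝ → Fin d → Matrix (Fin n) (Fin n) ℂ)
    (hherm : ∀ t ∈ I, ∀ r, (S t r).IsHermitian)
    (hcomm : ∀ t ∈ I, ∀ r s, S t r * S t s = S t s * S t r)
    (K : NNReal) (hLip : ∀ r i j, LipschitzOnWith K (fun t => S t r i j) I) :
    ∃ (x : Fin n → ℝ → Fin d → ℝ) (K' : NNReal),
      (∀ i, LipschitzOnWith K' (x i) I) ∧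
      (∀ t ∈ I, ∃ U ∈ Matrix.unitaryGroup (Fin n) ℂ, ∀ r,
        S t r = U * Matrix.diagonal (fun i => (x i t r : ℂ)) * star U) := by
  classical
  have hne (t : I) : (jointSpectrumEnumerations (S t)).Nonempty :=
    nonempty_jointSpectrumEnumerations (hherm t t.2) fun r s _ => hcomm t t.2 r s
  set K' : ℝ≥0 := NNReal.sqrt d * n * K
  have hmatch (t s : I) : ∀ v ∈ jointSpectrumEnumerations (S t),
      ∃ w ∈ jointSpectrumEnumerations (S s), dist v w ≤ K' * dist t s := by
    intro v hv
    obtain ⟨w, hw⟩ := hne s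
    obtain ⟨σ, hσ⟩ := exists_perm_dist_le_of_mem_jointSpectrumEnumerations hv hw
      (by positivity : 0 ≤ (K : ℝ) * dist t s) fun r p q => by
        simpa [dist_eq_norm, Subtype.dist_eq, Real.dist_eq] using
          (hLip r p q).dist_le_mul t t.2 s s.2
    refine ⟨w ∘ σ, comp_perm_mem_jointSpectrumEnumerations hw σ, hσ.trans_eq ?_⟩
    simp [K', mul_assoc]
  obtain ⟨f, hfE, hf⟩ := exists_lipschitzWith_selection
    (fun t => finite_jointSpectrumEnumerations _) hne hmatch
  refine ⟨fun i t => if ht : t ∈ I then f ⟨t, ht⟩ i else 0, K', fun i => ?_,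
    fun t ht => by simpa [ht, jointSpectrumEnumerations] using hfE ⟨t, ht⟩⟩
  rw [lipschitzOnWith_iff_restrict]
  simpa [Set.domRestrict, Function.comp_def] using (LipschitzWith.eval i).comp hf

/-- The joint eigenvalues of a Lipschitz curve in `CS^d_n` on an interval
can be represented by Lipschitz functions `x_1, ..., x_n : I → ℝ^d`: at each `t ∈ I`
their values enumerate the joint spectrum (with multiplicity), i.e. some unitary
simultaneously diagonalizes `S(t)` with diagonal entries `x_i(t)`. -/
theorem stmt14 (d n : ℕ) (I : Set ℝ) (hI : I.OrdConnected)
    (S : ℝ → Fin d → Matrix (Fin n) (Fin n) ℂ)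
    (hherm : ∀ t ∈ I, ∀ r, (S t r).IsHermitian)
    (hcomm : ∀ t ∈ I, ∀ r s, S t r * S t s = S t s * S t r)
    (K : NNReal) (hLip : ∀ r i j, LipschitzOnWith K (fun t => S t r i j) I) :
    ∃ (x : Fin n → ℝ → Fin d → ℝ) (K' : NNReal),
      (∀ i, LipschitzOnWith K' (x i) I) ∧
      (∀ t ∈ I, ∃ U ∈ Matrix.unitaryGroup (Fin n) ℂ, ∀ r,
        S t r = U * Matrix.diagonal (fun i => (x i t r : ℂ)) * star U) :=
  stmt14_general d n I S hherm hcomm K hLip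
end

section
/- Derivative bound for induced matrix functions: with the entrywise formula above and the compatibility condition on Γ, each off-diagonal-type entry satisfies |Γ^q_{ij}(f(x_i)−f(x_j))/(x^q_i−x^q_j)| ≤ d n² max_{s, x∈E} |∂f/∂x^s(x)| · max_{i,j,r} |Γ^r_{ij}|, where E is a convex set containing all x_i. -/
/-! By the mean value theorem on the convex set `E`, `f(xᵢ) - f(xⱼ) = ∑ₛ (xᵢˢ - xⱼˢ) ∂ₛf(c)` for
some `c ∈ E`. The compatibility condition says that `r ↦ Γ^r_{ij}` is proportional to
`xᵢ - xⱼ`, so multiplying by `Γ^q_{ij}` and dividing by `xᵢ^q - xⱼ^q` turns this into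
`∑ₛ ∂ₛf(c) Γ^s_{ij}`, whose norm is at most `M ∑ₛ |Γ^s_{ij}| ≤ d M G`. -/

open Finset

theorem map_eq_sum_mul_map_single {ι R F : Type*} [Fintype ι] [DecidableEq ι] [CommSemiring R]
    [FunLike F (ι → R) R] [LinearMapClass F R (ι → R) R] (L : F) (v : ι → R) :
    L v = ∑ s, v s * L (Pi.single s 1) := by
  conv_lhs => rw [← univ_sum_single v]
  rw [map_sum]
  refine sum_congr rfl fun s _ => ?_
  rw [← smul_eq_mul, ← map_smul, ← Pi.single_smul, smul_eq_mul, mul_one]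

theorem Convex.exists_sub_eq_sum_mul_fderivWithin_single {ι : Type*} [Fintype ι] [DecidableEq ι]
    {E : Set (ι → ℝ)} (hE : Convex ℝ E) {f : (ι → ℝ) → ℝ} (hf : DifferentiableOn ℝ f E)
    {a b : ι → ℝ} (ha : a ∈ E) (hb : b ∈ E) :
    ∃ c ∈ E, f b - f a = ∑ s, (b s - a s) * fderivWithin ℝ f E c (Pi.single s 1) := by
  obtain ⟨c, hc, hmvt⟩ := domain_mvt (fun y hy => (hf y hy).hasFDerivWithinAt) hE ha hb
  exact ⟨c, hE.segment_subset ha hb hc, hmvt.trans (map_eq_sum_mul_map_single _ _)⟩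

theorem mul_sum_eq_sum_mul_of_proportional {ι R : Type*} [Fintype ι] [CommRing R]
    {γ u : ι → R} (h : ∀ r s, γ s * u r = γ r * u s) (c : ι → R) (q : ι) :
    γ q * ∑ s, u s * c s = (∑ s, c s * γ s) * u q := by
  rw [mul_sum, sum_mul]
  exact sum_congr rfl fun s _ => by linear_combination c s * h s q

theorem norm_mul_div_self_le {K : Type*} [NormedDivisionRing K] (a z : K) :
    ‖a * z / z‖ ≤ ‖a‖ := by
  rcases eq_or_ne z 0 with rfl | hz
  · simp
  · rw [mul_div_cancel_right₀ a hz]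

theorem Convex.norm_mul_sub_div_sub_le {ι : Type*} [Fintype ι] [DecidableEq ι]
    {E : Set (ι → ℝ)} (hE : Convex ℝ E) {f : (ι → ℝ) → ℝ} (hf : DifferentiableOn ℝ f E)
    {M : ℝ} (hM : ∀ s, ∀ x ∈ E, |fderivWithin ℝ f E x (Pi.single s 1)| ≤ M)
    {a b : ι → ℝ} (ha : a ∈ E) (hb : b ∈ E) {γ : ι → ℂ}
    (hγ : ∀ r s, γ s * ((a r : ℂ) - (b r : ℂ)) = γ r * ((a s : ℂ) - (b s : ℂ))) (q : ι) :
    ‖γ q * ((f a : ℂ) - (f b : ℂ)) / ((a q : ℂ) - (b q : ℂ))‖ ≤ M * ∑ r, ‖γ r‖ := by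
  obtain ⟨c, hc, hmvt⟩ := hE.exists_sub_eq_sum_mul_fderivWithin_single hf hb ha
  set D := fun s => fderivWithin ℝ f E c (Pi.single s 1)
  have hmvtℂ : (f a : ℂ) - f b = ∑ s, ((a s : ℂ) - b s) * (D s : ℂ) := by
    exact_mod_cast congrArg Complex.ofReal hmvt
  calc ‖γ q * ((f a : ℂ) - (f b : ℂ)) / ((a q : ℂ) - (b q : ℂ))‖
      = ‖(∑ s, (D s : ℂ) * γ s) * ((a q : ℂ) - b q) / ((a q : ℂ) - b q)‖ := by
        rw [hmvtℂ, mul_sum_eq_sum_mul_of_proportional hγ]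
    _ ≤ ‖∑ s, (D s : ℂ) * γ s‖ := norm_mul_div_self_le _ _
    _ ≤ ∑ s, ‖(D s : ℂ) * γ s‖ := norm_sum_le _ _
    _ ≤ ∑ s, M * ‖γ s‖ := sum_le_sum fun s _ => by
        rw [norm_mul, Complex.norm_real, Real.norm_eq_abs]
        exact mul_le_mul_of_nonneg_right (hM s c hc) (norm_nonneg _)
    _ = M * ∑ s, ‖γ s‖ := (mul_sum _ _ _).symm

theorem stmt16_general (d n : ℕ) (E : Set (Fin d → ℝ)) (hEc : Convex ℝ E)
    (f : (Fin d → ℝ) → ℝ) (hf : ContDiffOn ℝ 1 f E)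
    (M : ℝ) (hM : ∀ (s : Fin d), ∀ x ∈ E, |fderivWithin ℝ f E x (Pi.single s 1)| ≤ M)
    (x : Fin n → Fin d → ℝ) (hx : ∀ i, x i ∈ E)
    (Γ : Fin d → Matrix (Fin n) (Fin n) ℂ)
    (hcompat : ∀ (i j : Fin n) (r s : Fin d),
      Γ s i j * ((x i r : ℂ) - (x j r : ℂ)) = Γ r i j * ((x i s : ℂ) - (x j s : ℂ)))
    (G : ℝ) (hG : ∀ (r : Fin d) (i j : Fin n), ‖Γ r i j‖ ≤ G)
    (i j : Fin n) (q : Fin d) :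
    ‖Γ q i j * ((f (x i) : ℂ) - (f (x j) : ℂ)) / ((x i q : ℂ) - (x j q : ℂ))‖ ≤
      d * n ^ 2 * M * G := by
  have hM0 : 0 ≤ M := (abs_nonneg _).trans (hM q (x i) (hx i))
  have hG0 : 0 ≤ G := (norm_nonneg _).trans (hG q i j)
  have hΓsum : ∑ r, ‖Γ r i j‖ ≤ d * G := by
    simpa using sum_le_sum fun r (_ : r ∈ univ) => hG r i j
  have hn : (1 : ℝ) ≤ n ^ 2 := one_le_pow₀ (by exact_mod_cast i.pos)
  calc _ ≤ M * ∑ r, ‖Γ r i j‖ :=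
        hEc.norm_mul_sub_div_sub_le (hf.differentiableOn one_ne_zero) hM (hx i) (hx j)
          (hcompat i j) q
    _ ≤ M * (d * G) := by gcongr
    _ = 1 * (d * M * G) := by ring
    _ ≤ n ^ 2 * (d * M * G) := by gcongr
    _ = d * n ^ 2 * M * G := by ring

/-- Derivative bound: under the compatibility condition on `Γ` and with
`M` bounding all first partials of `f` on the convex set `E` containing the joint
eigenvalues, and `G` bounding all entries of the `Γ^r`, each off-diagonal-type entry
satisfies `|Γ^q_{ij}(f(x_i)−f(x_j))/(x^q_i−x^q_j)| ≤ d n² M G`. -/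
theorem stmt16 (d n : ℕ) (E : Set (Fin d → ℝ)) (hE : IsOpen E) (hEc : Convex ℝ E)
    (f : (Fin d → ℝ) → ℝ) (hf : ContDiffOn ℝ 1 f E)
    (M : ℝ) (hM : ∀ (s : Fin d), ∀ x ∈ E, |fderivWithin ℝ f E x (Pi.single s 1)| ≤ M)
    (x : Fin n → Fin d → ℝ) (hx : ∀ i, x i ∈ E)
    (Γ : Fin d → Matrix (Fin n) (Fin n) ℂ)
    (hcompat : ∀ (i j : Fin n) (r s : Fin d),
      Γ s i j * ((x i r : ℂ) - (x j r : ℂ)) = Γ r i j * ((x i s : ℂ) - (x j s : ℂ)))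
    (G : ℝ) (hG : ∀ (r : Fin d) (i j : Fin n), ‖Γ r i j‖ ≤ G)
    (i j : Fin n) (q : Fin d) (hq : x i q ≠ x j q) :
    ‖Γ q i j * ((f (x i) : ℂ) - (f (x j) : ℂ)) / ((x i q : ℂ) - (x j q : ℂ))‖ ≤
      d * n ^ 2 * M * G :=
  stmt16_general d n E hEc f hf M hM x hx Γ hcompat G hG i j q
end

section
/- Continuity of induced matrix functions on commuting tuples: if f: Ω → ℝ is continuous on an open Ω ⊆ ℝ^d, then the induced matrix function F is continuous on CS^d_n(Ω), i.e., if S_k → S in CS^d_n with all joint spectra in Ω, then F(S_k) → F(S). -/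
/-!
Every subsequence of the diagonalizing unitaries `U k` has a further subsequence converging to
some `W`, unitary because the unitary group is compact. Along it the eigenvalues `x k`, being the
diagonal of `(U k)ᴴ * S k * U k`, converge to some `z`, and `T = W * diagonal z * Wᴴ`. Comparing
this with `T = V * diagonal y * Vᴴ`, the intertwiner `Vᴴ * W` only links equal joint eigenvalues,
so `z` takes values in the joint spectrum `y ⊆ Ω`, where `f` is continuous, and
`W * diagonal (f ∘ z) * Wᴴ = V * diagonal (f ∘ y) * Vᴴ`. Hence every subsequence of `F (S k)` has
a further subsequence converging to `F T`.
-/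

open Filter Topology Matrix

namespace Matrix

instance {m n R : Type*} [Countable m] [Countable n] [TopologicalSpace R]
    [FirstCountableTopology R] : FirstCountableTopology (Matrix m n R) :=
  inferInstanceAs (FirstCountableTopology (m → n → R))

variable {ι κ β : Type*} [Fintype ι] [DecidableEq ι]

theorem eq_of_mul_diagonal_eq_diagonal_mul {R : Type*} [CommRing R] [NoZeroDivisors R]
    {M : Matrix ι ι R} {a b : ι → R} (h : M * diagonal a = diagonal b * M) {i j : ι}
    (hij : M i j ≠ 0) : a j = b i := by
  have hij' := congr_fun (congr_fun h i) j
  rw [mul_diagonal, diagonal_mul, mul_comm] at hij'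
  exact mul_right_cancel₀ hij hij'

theorem mul_diagonal_comp_eq_diagonal_comp_mul {R α : Type*} [CommSemiring R]
    {M : Matrix ι ι R} {z y : ι → α} (h : ∀ i j, M i j ≠ 0 → z j = y i) (g : α → R) :
    M * diagonal (g ∘ z) = diagonal (g ∘ y) * M := by
  ext i j
  rw [mul_diagonal, diagonal_mul]
  by_cases hij : M i j = 0
  · simp [hij]
  · simp [h i j hij, mul_comm]

theorem exists_apply_ne_zero_of_mem_unitaryGroup {R : Type*} [CommRing R] [StarRing R]
    [Nontrivial R] {M : Matrix ι ι R} (hM : M ∈ unitaryGroup ι R) (j : ι) : ∃ i, M i j ≠ 0 := by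
  by_contra! h
  have hjj := congr_fun (congr_fun (mem_unitaryGroup_iff'.mp hM) j) j
  simp [mul_apply, h] at hjj

variable {𝕜 : Type*} [RCLike 𝕜]

theorem isCompact_unitaryGroup : IsCompact (unitaryGroup ι 𝕜 : Set (Matrix ι ι 𝕜)) :=
  (isCompact_univ_pi fun _ => isCompact_univ_pi fun _ => isCompact_closedBall (0 : 𝕜) 1)
    |>.of_isClosed_subset (isClosed_unitary (R := Matrix ι ι 𝕜))
    fun _ hU i _ j _ => mem_closedBall_zero_iff.mpr (entry_norm_bound_of_unitary hU i j)

theorem mul_diagonal_comp_mul_star_eq_of_forall_eq {W V : Matrix ι ι 𝕜}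
    (hW : W ∈ unitaryGroup ι 𝕜) (hV : V ∈ unitaryGroup ι 𝕜) {z y : ι → κ → ℝ}
    (h : ∀ r, W * diagonal (fun i => (z i r : 𝕜)) * star W =
      V * diagonal (fun i => (y i r : 𝕜)) * star V) :
    (∀ j, ∃ i, z j = y i) ∧
      ∀ g : (κ → ℝ) → 𝕜, W * diagonal (g ∘ z) * star W = V * diagonal (g ∘ y) * star V := by
  set M := star V * W
  have hM : M ∈ unitaryGroup ι 𝕜 := mul_mem (Unitary.star_mem hV) hW
  have hWM : W = V * M := by
    rw [← mul_assoc, Unitary.mul_star_self_of_mem hV, one_mul]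
  have hintertwine : ∀ r, M * diagonal (fun i => (z i r : 𝕜)) =
      diagonal (fun i => (y i r : 𝕜)) * M := fun r => by
    calc M * diagonal (fun i => (z i r : 𝕜))
        = star V * (W * diagonal (fun i => (z i r : 𝕜)) * star W) * W := by
          simp only [M, mul_assoc, Unitary.star_mul_self_of_mem hW, mul_one]
      _ = diagonal (fun i => (y i r : 𝕜)) * M := by
          simp only [h r, M, ← mul_assoc, Unitary.star_mul_self_of_mem hV, one_mul]
  have hmatch : ∀ i j, M i j ≠ 0 → z j = y i := fun i j hij => funext fun r => by
    exact_mod_cast eq_of_mul_diagonal_eq_diagonal_mul (hintertwine r) hij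
  refine ⟨fun j => ?_, fun g => ?_⟩
  · obtain ⟨i, hi⟩ := exists_apply_ne_zero_of_mem_unitaryGroup hM j
    exact ⟨i, hmatch i j hi⟩
  · rw [hWM, star_mul, mul_assoc V, mul_diagonal_comp_eq_diagonal_comp_mul hmatch g]
    simp only [mul_assoc]
    rw [← mul_assoc M, Unitary.mul_star_self_of_mem hM, one_mul]

theorem star_mul_conj_mul {R : Type*} [CommRing R] [StarRing R] {U : Matrix ι ι R}
    (hU : U ∈ unitaryGroup ι R) (A : Matrix ι ι R) : star U * (U * A * star U) * U = A := by
  simp only [← mul_assoc, Unitary.star_mul_self_of_mem hU, one_mul]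
  rw [mul_assoc, Unitary.star_mul_self_of_mem hU, mul_one]

theorem _root_.Filter.Tendsto.mul_diagonal_mul_star {R : Type*} [TopologicalSpace R] [Semiring R]
    [Star R] [IsTopologicalSemiring R] [ContinuousStar R] {l : Filter β} {U : β → Matrix ι ι R}
    {v : β → ι → R} {W : Matrix ι ι R} {w : ι → R} (hU : Tendsto U l (𝓝 W))
    (hv : Tendsto v l (𝓝 w)) :
    Tendsto (fun k => U k * diagonal (v k) * star (U k)) l (𝓝 (W * diagonal w * star W)) :=
  (hU.mul ((continuous_id.matrix_diagonal.tendsto w).comp hv)).mul hU.star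

theorem exists_tendsto_and_eq_mul_diagonal_mul_star {l : Filter β} [l.NeBot]
    {U : β → Matrix ι ι 𝕜} {W A : Matrix ι ι 𝕜} {x : β → ι → ℝ}
    (hU : ∀ k, U k ∈ unitaryGroup ι 𝕜) (hUW : Tendsto U l (𝓝 W))
    (hA : Tendsto (fun k => U k * diagonal (fun i => (x k i : 𝕜)) * star (U k)) l (𝓝 A)) :
    ∃ z : ι → ℝ, Tendsto x l (𝓝 z) ∧ A = W * diagonal (fun i => (z i : 𝕜)) * star W := by
  have hx : x = fun k i => RCLike.re ((star (U k) * (U k * diagonal (fun i => (x k i : 𝕜)) *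
      star (U k)) * U k) i i) := by
    simp [star_mul_conj_mul (hU _)]
  set z : ι → ℝ := fun i => RCLike.re ((star W * A * W) i i)
  have hxz : Tendsto x l (𝓝 z) := by
    rw [hx]
    exact tendsto_pi_nhds.mpr fun i => (RCLike.continuous_re.tendsto _).comp <|
      ((continuous_apply_apply i i).tendsto _).comp ((hUW.star.mul hA).mul hUW)
  refine ⟨z, hxz, tendsto_nhds_unique hA ?_⟩
  exact hUW.mul_diagonal_mul_star <| tendsto_pi_nhds.mpr fun i =>
    (RCLike.continuous_ofReal.tendsto _).comp (tendsto_pi_nhds.mp hxz i)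

theorem tendsto_mul_diagonal_comp_mul_star {l : Filter β} [l.NeBot] {Ω : Set (κ → ℝ)}
    (hΩ : IsOpen Ω) {g : (κ → ℝ) → 𝕜} (hg : ContinuousOn g Ω) {U : β → Matrix ι ι 𝕜}
    {W V : Matrix ι ι 𝕜} (hU : ∀ k, U k ∈ unitaryGroup ι 𝕜) (hUW : Tendsto U l (𝓝 W))
    (hV : V ∈ unitaryGroup ι 𝕜) {x : β → ι → κ → ℝ} {y : ι → κ → ℝ} (hy : ∀ i, y i ∈ Ω)
    (hconv : ∀ r, Tendsto (fun k => U k * diagonal (fun i => (x k i r : 𝕜)) * star (U k)) l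
      (𝓝 (V * diagonal (fun i => (y i r : 𝕜)) * star V))) :
    Tendsto (fun k => U k * diagonal (g ∘ x k) * star (U k)) l
      (𝓝 (V * diagonal (g ∘ y) * star V)) := by
  have hW : W ∈ unitaryGroup ι 𝕜 := isClosed_unitary.mem_of_tendsto hUW (.of_forall hU)
  choose z hxz hz using fun r => exists_tendsto_and_eq_mul_diagonal_mul_star hU hUW (hconv r)
  obtain ⟨hzy, hgzy⟩ := mul_diagonal_comp_mul_star_eq_of_forall_eq hW hV
    (z := fun i r => z r i) fun r => (hz r).symm
  have hgx : Tendsto (fun k => g ∘ x k) l (𝓝 (g ∘ fun i r => z r i)) := by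
    refine tendsto_pi_nhds.mpr fun i => ?_
    obtain ⟨j, hij⟩ := hzy i
    have hzΩ : (fun r => z r i) ∈ Ω := hij ▸ hy j
    exact (hg.continuousAt (hΩ.mem_nhds hzΩ)).tendsto.comp
      (tendsto_pi_nhds.mpr fun r => tendsto_pi_nhds.mp (hxz r) i)
  rw [← hgzy g]
  exact hUW.mul_diagonal_mul_star hgx

end Matrix

theorem stmt19_general (d n : ℕ) (Ω : Set (Fin d → ℝ)) (hΩ : IsOpen Ω)
    (f : (Fin d → ℝ) → ℝ) (hf : ContinuousOn f Ω)
    (S : ℕ → Fin d → Matrix (Fin n) (Fin n) ℂ)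
    (T : Fin d → Matrix (Fin n) (Fin n) ℂ)
    (U : ℕ → Matrix (Fin n) (Fin n) ℂ) (V : Matrix (Fin n) (Fin n) ℂ)
    (hU : ∀ k, U k ∈ Matrix.unitaryGroup (Fin n) ℂ)
    (hV : V ∈ Matrix.unitaryGroup (Fin n) ℂ)
    (x : ℕ → Fin n → Fin d → ℝ) (y : Fin n → Fin d → ℝ)
    (hyΩ : ∀ i, y i ∈ Ω)
    (hdiagS : ∀ k r, S k r = U k * Matrix.diagonal (fun i => (x k i r : ℂ)) * star (U k))
    (hdiagT : ∀ r, T r = V * Matrix.diagonal (fun i => (y i r : ℂ)) * star V)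
    (hconv : ∀ r i j, Tendsto (fun k => S k r i j) atTop (nhds (T r i j))) :
    ∀ i j, Tendsto
      (fun k => (U k * Matrix.diagonal (fun i' => (f (x k i') : ℂ)) * star (U k)) i j)
      atTop
      (nhds ((V * Matrix.diagonal (fun i' => (f (y i') : ℂ)) * star V) i j)) := by
  have hS : ∀ r, Tendsto (fun k => U k * diagonal (fun i => (x k i r : ℂ)) * star (U k)) atTop
      (𝓝 (V * diagonal (fun i => (y i r : ℂ)) * star V)) := fun r => by
    simp only [← hdiagS, ← hdiagT]
    exact tendsto_pi_nhds.mpr fun i => tendsto_pi_nhds.mpr (hconv r i)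
  have hF : Tendsto (fun k => U k * diagonal (fun i => (f (x k i) : ℂ)) * star (U k)) atTop
      (𝓝 (V * diagonal (fun i => (f (y i) : ℂ)) * star V)) := by
    refine tendsto_of_subseq_tendsto fun ns hns => ?_
    obtain ⟨W, -, φ, hφ, hUW⟩ := isCompact_unitaryGroup.tendsto_subseq fun k => hU (ns k)
    exact ⟨φ, tendsto_mul_diagonal_comp_mul_star hΩ
      (Complex.continuous_ofReal.comp_continuousOn hf) (fun k => hU _) hUW hV hyΩ
      fun r => (hS r).comp (hns.comp hφ.tendsto_atTop)⟩
  exact fun i j => ((continuous_apply_apply i j).tendsto _).comp hF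

/-- Continuity of induced matrix functions on commuting tuples: if `f` is
continuous on the open set `Ω ⊆ ℝ^d` and `S_k → S` in `CS^d_n` with all joint spectra in
`Ω`, then `F(S_k) → F(S)`, where `F` acts through a simultaneous diagonalization. -/
theorem stmt19 (d n : ℕ) (Ω : Set (Fin d → ℝ)) (hΩ : IsOpen Ω)
    (f : (Fin d → ℝ) → ℝ) (hf : ContinuousOn f Ω)
    (S : ℕ → Fin d → Matrix (Fin n) (Fin n) ℂ)
    (T : Fin d → Matrix (Fin n) (Fin n) ℂ)
    (U : ℕ → Matrix (Fin n) (Fin n) ℂ) (V : Matrix (Fin n) (Fin n) ℂ)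
    (hU : ∀ k, U k ∈ Matrix.unitaryGroup (Fin n) ℂ)
    (hV : V ∈ Matrix.unitaryGroup (Fin n) ℂ)
    (x : ℕ → Fin n → Fin d → ℝ) (y : Fin n → Fin d → ℝ)
    (hxΩ : ∀ k i, x k i ∈ Ω) (hyΩ : ∀ i, y i ∈ Ω)
    (hdiagS : ∀ k r, S k r = U k * Matrix.diagonal (fun i => (x k i r : ℂ)) * star (U k))
    (hdiagT : ∀ r, T r = V * Matrix.diagonal (fun i => (y i r : ℂ)) * star V)
    (hconv : ∀ r i j, Tendsto (fun k => S k r i j) atTop (nhds (T r i j))) :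
    ∀ i j, Tendsto
      (fun k => (U k * Matrix.diagonal (fun i' => (f (x k i') : ℂ)) * star (U k)) i j)
      atTop
      (nhds ((V * Matrix.diagonal (fun i' => (f (y i') : ℂ)) * star V) i j)) :=
  stmt19_general d n Ω hΩ f hf S T U V hU hV x y hyΩ hdiagS hdiagT hconv
end
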